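/- arXiv:2604.05288 — 10 statements merged into one kernel-verified Lean document; each statement's English description precedes it below -/
import Mathlib

section
/- Let 0 < c < 1 be a real and s a positive integer. Let G be a bipartite graph with bipartition (X, Y). If e(G) ≥ c|X||Y| and c|X| ≥ 2s, then there exists a set S ⊆ X with |S| = s such that the common neighborhood of S in Y has size at least (c/2)^s |Y|. -/
open Finset

/-- averaging lemma for bipartite graphs. -/
theorem stmt_0 {V : Type*} [Fintype V] [DecidableEq V]
    (G : SimpleGraph V) [DecidableRel G.Adj]
    (X Y : Finset V) (hdisj : Disjoint X Y) (hcover : X ∪ Y = Finset.univ)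
    (hbip : ∀ u v, G.Adj u v → (u ∈ X ∧ v ∈ Y) ∨ (u ∈ Y ∧ v ∈ X))
    (c : ℝ) (hc0 : 0 < c) (hc1 : c < 1) (s : ℕ) (hs : 1 ≤ s)
    (hedges : c * X.card * Y.card ≤ (G.edgeFinset.card : ℝ))
    (hcX : (2 * s : ℝ) ≤ c * X.card) :
    ∃ S ⊆ X, S.card = s ∧
      (c / 2) ^ s * (Y.card : ℝ) ≤
        ((Y.filter (fun y => ∀ x ∈ S, G.Adj x y)).card : ℝ) := by
  classical
  set d : V → ℕ := fun y => (X.filter (fun x => G.Adj x y)).card with hd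
  have hs1 : (1 : ℝ) ≤ (s : ℝ) := by exact_mod_cast hs
  -- X.card is positive and s ≤ X.card
  have hXpos : 0 < (X.card : ℝ) := by
    rcases lt_or_ge (0 : ℝ) (X.card : ℝ) with h | h
    · exact h
    · nlinarith
  have hsX : s ≤ X.card := by
    have : (s : ℝ) ≤ (X.card : ℝ) := by nlinarith
    exact_mod_cast this
  -- degree facts
  have hdegY : ∀ y ∈ Y, G.degree y = d y := by
    intro y hy
    rw [← SimpleGraph.card_neighborFinset_eq_degree]
    congr 1
    ext x
    simp only [SimpleGraph.mem_neighborFinset, mem_filter, hd]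
    constructor
    · intro hadj
      rcases hbip y x hadj with ⟨hyX, _⟩ | ⟨_, hxX⟩
      · exact absurd hy (Finset.disjoint_left.mp hdisj hyX)
      · exact ⟨hxX, hadj.symm⟩
    · exact fun ⟨_, hadj⟩ => hadj.symm
  have hdegX : ∀ x ∈ X, G.degree x = (Y.filter (fun y => G.Adj x y)).card := by
    intro x hx
    rw [← SimpleGraph.card_neighborFinset_eq_degree]
    congr 1
    ext y
    simp only [SimpleGraph.mem_neighborFinset, mem_filter]
    constructor
    · intro hadj
      rcases hbip x y hadj with ⟨_, hyY⟩ | ⟨hxY, _⟩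
      · exact ⟨hyY, hadj⟩
      · exact absurd hxY (Finset.disjoint_left.mp hdisj hx)
    · exact fun ⟨_, hadj⟩ => hadj
  -- edge count equals sum of degrees over Y
  have hsum : ∑ y ∈ Y, d y = G.edgeFinset.card := by
    have h2 := G.sum_degrees_eq_twice_card_edges
    have hsplit : ∑ v, G.degree v = ∑ v ∈ X, G.degree v + ∑ v ∈ Y, G.degree v := by
      rw [← Finset.sum_union hdisj, hcover]
    have hX : ∑ v ∈ X, G.degree v = ∑ y ∈ Y, d y := by
      calc ∑ v ∈ X, G.degree v
          = ∑ x ∈ X, (Y.filter (fun y => G.Adj x y)).card :=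
            Finset.sum_congr rfl hdegX
        _ = ∑ x ∈ X, ∑ y ∈ Y, (if G.Adj x y then 1 else 0) :=
            Finset.sum_congr rfl fun x _ => Finset.card_filter _ _
        _ = ∑ y ∈ Y, ∑ x ∈ X, (if G.Adj x y then 1 else 0) := Finset.sum_comm
        _ = ∑ y ∈ Y, d y := by
            refine Finset.sum_congr rfl fun y _ => ?_
            simp only [hd]
            exact (Finset.card_filter _ _).symm
    have hY : ∑ v ∈ Y, G.degree v = ∑ y ∈ Y, d y := Finset.sum_congr rfl hdegY
    omega
  set P := X.powersetCard s with hP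
  -- key double counting identity
  have hkey : ∑ S ∈ P, (Y.filter (fun y => ∀ x ∈ S, G.Adj x y)).card
      = ∑ y ∈ Y, (d y).choose s := by
    calc ∑ S ∈ P, (Y.filter (fun y => ∀ x ∈ S, G.Adj x y)).card
        = ∑ S ∈ P, ∑ y ∈ Y, (if ∀ x ∈ S, G.Adj x y then 1 else 0) :=
          Finset.sum_congr rfl fun S _ => Finset.card_filter _ _
      _ = ∑ y ∈ Y, ∑ S ∈ P, (if ∀ x ∈ S, G.Adj x y then 1 else 0) := Finset.sum_comm
      _ = ∑ y ∈ Y, (d y).choose s := by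
          refine Finset.sum_congr rfl fun y _ => ?_
          rw [← Finset.card_filter]
          have heq : P.filter (fun S => ∀ x ∈ S, G.Adj x y)
              = (X.filter (fun x => G.Adj x y)).powersetCard s := by
            ext S
            simp only [mem_filter, mem_powersetCard, hP]
            constructor
            · rintro ⟨⟨hSX, hcard⟩, hall⟩
              exact ⟨fun x hx => mem_filter.2 ⟨hSX hx, hall x hx⟩, hcard⟩
            · rintro ⟨hsub, hcard⟩
              exact ⟨⟨fun x hx => (mem_filter.1 (hsub hx)).1, hcard⟩,
                fun x hx => (mem_filter.1 (hsub hx)).2⟩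
          rw [heq, Finset.card_powersetCard]
  -- get a subset of the right size (needed in degenerate case)
  have hPne : P.Nonempty := Finset.powersetCard_nonempty.2 hsX
  -- degenerate case Y empty
  rcases Finset.eq_empty_or_nonempty Y with hYe | hYne
  · obtain ⟨S, hSP⟩ := hPne
    obtain ⟨hsub, hcard⟩ := Finset.mem_powersetCard.1 hSP
    refine ⟨S, hsub, hcard, ?_⟩
    rw [hYe]
    simp
  have hYpos : 0 < (Y.card : ℝ) := by exact_mod_cast Finset.card_pos.2 hYne
  obtain ⟨n, rfl⟩ : ∃ n, s = n + 1 := ⟨s - 1, by omega⟩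
  set m : V → ℝ := fun y => max ((d y : ℝ) - (n + 1)) 0 with hm
  have hm1 : ∀ y ∈ Y, m y ^ (n + 1) ≤ ((n+1).factorial : ℝ) * ((d y).choose (n+1) : ℝ) := by
    intro y _
    rcases le_or_gt ((d y : ℝ) - (n + 1)) 0 with h | h
    · have hz : m y = 0 := max_eq_right h
      rw [hz, zero_pow (by omega : n + 1 ≠ 0)]
      positivity
    · have hds : n + 1 ≤ d y := by
        have : ((n : ℝ) + 1) ≤ (d y : ℝ) := by linarith
        exact_mod_cast this
      have hmy : m y = ((d y - (n + 1) : ℕ) : ℝ) := by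
        rw [hm]
        simp only []
        rw [max_eq_left h.le, Nat.cast_sub hds]
        push_cast
        ring
      rw [hmy]
      have hnat : (d y - (n + 1)) ^ (n + 1) ≤ (n+1).factorial * (d y).choose (n+1) := by
        calc (d y - (n+1)) ^ (n+1) ≤ (d y + 1 - (n+1)) ^ (n+1) :=
              Nat.pow_le_pow_left (by omega) (n+1)
          _ ≤ (d y).descFactorial (n+1) := Nat.pow_sub_le_descFactorial _ _
          _ = (n+1).factorial * (d y).choose (n+1) :=
              Nat.descFactorial_eq_factorial_mul_choose _ _
      exact_mod_cast hnat
  have hm2 : (c * X.card / 2) * Y.card ≤ ∑ y ∈ Y, m y := by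
    have h1 : ∑ y ∈ Y, ((d y : ℝ) - (n+1)) ≤ ∑ y ∈ Y, m y :=
      Finset.sum_le_sum fun y _ => le_max_left _ _
    have h2 : ∑ y ∈ Y, ((d y : ℝ) - (n+1)) = (∑ y ∈ Y, (d y : ℝ)) - (n+1) * Y.card := by
      rw [Finset.sum_sub_distrib, Finset.sum_const, nsmul_eq_mul]
      ring
    have h3 : (∑ y ∈ Y, (d y : ℝ)) = (G.edgeFinset.card : ℝ) := by
      rw [← Nat.cast_sum, hsum]
    have hcXn : ((n : ℝ) + 1) ≤ c * X.card / 2 := by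
      push_cast at hcX
      linarith
    nlinarith [hYpos.le]
  have hm3 : (c * X.card / 2) ^ (n+1) * Y.card ≤ ∑ y ∈ Y, m y ^ (n+1) := by
    have hpm := pow_sum_div_card_le_sum_pow (s := Y) (f := m)
      (fun i _ => le_max_right _ _) n
    have h1 : ((c * X.card / 2) * Y.card) ^ (n+1) / (Y.card : ℝ) ^ n
        ≤ (∑ y ∈ Y, m y) ^ (n+1) / (Y.card : ℝ) ^ n := by
      gcongr
    have h2 : ((c * X.card / 2) * Y.card) ^ (n+1) / (Y.card : ℝ) ^ n
        = (c * X.card / 2) ^ (n+1) * Y.card := by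
      rw [mul_pow]
      field_simp
      ring
    calc (c * X.card / 2) ^ (n+1) * Y.card
        = ((c * X.card / 2) * Y.card) ^ (n+1) / (Y.card : ℝ) ^ n := h2.symm
      _ ≤ (∑ y ∈ Y, m y) ^ (n+1) / (Y.card : ℝ) ^ n := h1
      _ ≤ ∑ y ∈ Y, m y ^ (n+1) := hpm
  -- combine with double counting
  set N : Finset V → ℕ := fun S => (Y.filter (fun y => ∀ x ∈ S, G.Adj x y)).card with hN
  have hPF : ((n+1).factorial : ℝ) * (P.card : ℝ) ≤ (X.card : ℝ) ^ (n+1) := by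
    have h1 : (n+1).factorial * X.card.choose (n+1) ≤ X.card ^ (n+1) := by
      rw [← Nat.descFactorial_eq_factorial_mul_choose]
      exact Nat.descFactorial_le_pow _ _
    have h2 : P.card = X.card.choose (n+1) := Finset.card_powersetCard _ _
    rw [h2]
    exact_mod_cast h1
  have hfinal : ((n+1).factorial : ℝ) * ((c/2) ^ (n+1) * Y.card * P.card)
      ≤ ((n+1).factorial : ℝ) * ∑ S ∈ P, ((N S : ℝ)) := by
    calc ((n+1).factorial : ℝ) * ((c/2) ^ (n+1) * Y.card * P.card)
        = (c/2) ^ (n+1) * Y.card * (((n+1).factorial : ℝ) * P.card) := by ring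
      _ ≤ (c/2) ^ (n+1) * Y.card * (X.card : ℝ) ^ (n+1) := by
          apply mul_le_mul_of_nonneg_left hPF
          positivity
      _ = (c * X.card / 2) ^ (n+1) * Y.card := by
          rw [show c * (X.card : ℝ) / 2 = (c/2) * X.card by ring, mul_pow]
          ring
      _ ≤ ∑ y ∈ Y, m y ^ (n+1) := hm3
      _ ≤ ∑ y ∈ Y, ((n+1).factorial : ℝ) * ((d y).choose (n+1) : ℝ) :=
          Finset.sum_le_sum hm1
      _ = ((n+1).factorial : ℝ) * ∑ y ∈ Y, ((d y).choose (n+1) : ℝ) := by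
          rw [Finset.mul_sum]
      _ = ((n+1).factorial : ℝ) * ∑ S ∈ P, ((N S : ℝ)) := by
          congr 1
          rw [← Nat.cast_sum, ← Nat.cast_sum, hkey]
  have hFpos : (0 : ℝ) < ((n+1).factorial : ℝ) := by
    exact_mod_cast Nat.factorial_pos _
  have hmain : (c/2) ^ (n+1) * Y.card * P.card ≤ ∑ S ∈ P, ((N S : ℝ)) :=
    le_of_mul_le_mul_left hfinal hFpos
  have hsums : ∑ S ∈ P, ((c/2) ^ (n+1) * (Y.card : ℝ)) ≤ ∑ S ∈ P, ((N S : ℝ)) := by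
    rw [Finset.sum_const, nsmul_eq_mul]
    calc (P.card : ℝ) * ((c/2) ^ (n+1) * Y.card)
        = (c/2) ^ (n+1) * Y.card * P.card := by ring
      _ ≤ _ := hmain
  obtain ⟨S, hSP, hle⟩ := Finset.exists_le_of_sum_le hPne hsums
  obtain ⟨hsub, hcard⟩ := Finset.mem_powersetCard.1 hSP
  exact ⟨S, hsub, hcard, hle⟩
end

section
/- Let 0 < c < 1 be a real and s ≥ 2 an integer. Let G be a K_{s,s}-free graph and W a set of vertices of G with |W| ≥ s·(2/c)^s. Let B(W) be the set of vertices of G outside W having at least c|W| neighbors in W. Then |B(W)| < 2s/c. -/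
open Finset

/-- A graph is `K_{s,s}`-free if it contains no complete bipartite subgraph with
two disjoint parts of size `s`. -/
def KssFree {V : Type*} (s : ℕ) (G : SimpleGraph V) : Prop :=
  ¬ ∃ (A B : Finset V), A.card = s ∧ B.card = s ∧ Disjoint A B ∧
      ∀ a ∈ A, ∀ b ∈ B, G.Adj a b

/-- the small bad set lemma. -/
theorem stmt_1 {V : Type*} [Fintype V] [DecidableEq V]
    (G : SimpleGraph V) [DecidableRel G.Adj]
    (s : ℕ) (hs : 2 ≤ s) (hG : KssFree s G)
    (c : ℝ) (hc0 : 0 < c) (hc1 : c < 1)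
    (W : Finset V) (hW : (s : ℝ) * (2 / c) ^ s ≤ (W.card : ℝ))
    (B : Finset V)
    (hB : ∀ x, x ∈ B ↔ x ∉ W ∧ c * (W.card : ℝ) ≤ ((W.filter (fun w => G.Adj x w)).card : ℝ)) :
    (B.card : ℝ) < 2 * s / c := by
  by_contra hcon
  push_neg at hcon
  set n : ℕ := W.card with hn
  set m : ℕ := B.card with hm
  have hs1 : (1:ℝ) ≤ s := by exact_mod_cast Nat.one_le_of_lt hs
  have hpow : (0:ℝ) < (2 / c) ^ s := by positivity
  have hnpos : (0:ℝ) < n := lt_of_lt_of_le (by positivity) hW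
  have hcm : 2 * (s:ℝ) ≤ c * m := by
    rw [div_le_iff₀ hc0] at hcon; linarith
  -- degree of w into B
  set d : V → ℕ := fun w => (B.filter (fun x => G.Adj w x)).card with hd
  -- edge count swap
  have hswap : ∑ w ∈ W, (d w : ℝ) = ∑ x ∈ B, ((W.filter (fun w => G.Adj x w)).card : ℝ) := by
    have h0 : ∑ w ∈ W, (d w : ℕ) = ∑ x ∈ B, (W.filter (fun w => G.Adj x w)).card := by
      simp_rw [hd, card_filter]
      rw [Finset.sum_comm]
      exact Finset.sum_congr rfl fun x _ => Finset.sum_congr rfl fun w _ =>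
        if_congr (G.adj_comm w x) rfl rfl
    exact_mod_cast congrArg (Nat.cast : ℕ → ℝ) h0
  have hedges : c * n * m ≤ ∑ w ∈ W, (d w : ℝ) := by
    rw [hswap]
    calc c * n * m = ∑ _x ∈ B, c * n := by rw [Finset.sum_const, ← hm, nsmul_eq_mul]; ring
    _ ≤ _ := Finset.sum_le_sum fun x hx => ((hB x).1 hx).2
  -- key double counting bound
  have hkey : ∑ w ∈ W, (d w).choose s ≤ (s - 1) * m.choose s := by
    have hstep : ∀ w, (d w).choose s
        = ((B.powersetCard s).filter (fun T => ∀ b ∈ T, G.Adj w b)).card := by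
      intro w
      rw [hd]
      simp only
      rw [← Finset.card_powersetCard]
      congr 1
      ext T
      simp only [Finset.mem_powersetCard, Finset.mem_filter]
      constructor
      · rintro ⟨hsub, hcard⟩
        exact ⟨⟨fun x hx => (Finset.mem_filter.1 (hsub hx)).1, hcard⟩,
          fun b hb => (Finset.mem_filter.1 (hsub hb)).2⟩
      · rintro ⟨⟨hsub, hcard⟩, hadj⟩
        exact ⟨fun x hx => Finset.mem_filter.2 ⟨hsub hx, hadj x hx⟩, hcard⟩
    calc ∑ w ∈ W, (d w).choose s
        = ∑ w ∈ W, ((B.powersetCard s).filter (fun T => ∀ b ∈ T, G.Adj w b)).card :=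
          Finset.sum_congr rfl fun w _ => hstep w
      _ = ∑ T ∈ B.powersetCard s, (W.filter (fun w => ∀ b ∈ T, G.Adj w b)).card := by
          simp_rw [card_filter]; rw [Finset.sum_comm]
      _ ≤ ∑ _T ∈ B.powersetCard s, (s - 1) := by
          refine Finset.sum_le_sum fun T hT => ?_
          rw [Finset.mem_powersetCard] at hT
          by_contra hbig
          push_neg at hbig
          have hsle : s ≤ (W.filter (fun w => ∀ b ∈ T, G.Adj w b)).card := by omega
          obtain ⟨A, hAsub, hAcard⟩ := Finset.exists_subset_card_eq hsle
          refine hG ⟨A, T, hAcard, hT.2, ?_, ?_⟩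
          · rw [Finset.disjoint_left]
            intro a haA haT
            exact ((hB a).1 (hT.1 haT)).1 ((Finset.mem_filter.1 (hAsub haA)).1)
          · intro a ha b hb
            exact (Finset.mem_filter.1 (hAsub ha)).2 b hb
      _ = (s - 1) * m.choose s := by
          rw [Finset.sum_const, Finset.card_powersetCard, smul_eq_mul, mul_comm, hm]
  -- real-valued lower bound on the choose sum
  set f : V → ℝ := fun w => max ((d w : ℝ) - ((s : ℝ) - 1)) 0 with hf
  have hfnonneg : ∀ w, 0 ≤ f w := fun w => le_max_right _ _
  have hchoose_lb : ∀ w, f w ^ s ≤ (s.factorial : ℝ) * ((d w).choose s : ℝ) := by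
    intro w
    have h1 : (d w + 1 - s) ^ s ≤ (d w).descFactorial s := Nat.pow_sub_le_descFactorial _ _
    have h2 : (d w).descFactorial s = s.factorial * (d w).choose s :=
      Nat.descFactorial_eq_factorial_mul_choose _ _
    have h3 : ((d w + 1 - s : ℕ) : ℝ) ^ s ≤ (s.factorial : ℝ) * ((d w).choose s : ℝ) := by
      have h4 := h1
      rw [h2] at h4
      exact_mod_cast h4
    refine le_trans (pow_le_pow_left₀ (hfnonneg w) ?_ s) h3
    rw [hf]
    simp only [max_le_iff]
    refine ⟨?_, by positivity⟩
    rcases le_or_gt s (d w + 1) with h | h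
    · rw [Nat.cast_sub h]; push_cast; linarith
    · have hz : d w + 1 - s = 0 := by omega
      rw [hz]
      have : (d w : ℝ) + 1 ≤ s := by exact_mod_cast h.le
      push_cast
      linarith
  have hsumf : (n : ℝ) * (c * m - (s:ℝ) + 1) ≤ ∑ w ∈ W, f w := by
    calc (n : ℝ) * (c * m - (s:ℝ) + 1)
        = c * n * m - n * ((s:ℝ) - 1) := by ring
      _ ≤ (∑ w ∈ W, (d w : ℝ)) - n * ((s:ℝ)-1) := by linarith
      _ = ∑ w ∈ W, ((d w : ℝ) - ((s:ℝ)-1)) := by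
          rw [Finset.sum_sub_distrib, Finset.sum_const, ← hn, nsmul_eq_mul]
      _ ≤ ∑ w ∈ W, f w := Finset.sum_le_sum fun w _ => le_max_left _ _
  set X : ℝ := c * m - (s:ℝ) + 1 with hX
  have hXpos : (0:ℝ) < X := by rw [hX]; nlinarith
  have hjensen : (∑ w ∈ W, f w) ^ s / (n:ℝ) ^ (s-1) ≤ ∑ w ∈ W, f w ^ s := by
    have h0 := pow_sum_div_card_le_sum_pow (s := W) (f := f)
      (fun w _ => hfnonneg w) (s - 1)
    rwa [Nat.sub_add_cancel (by omega : 1 ≤ s), ← hn] at h0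
  have hL : (n:ℝ) * X ^ s ≤ (∑ w ∈ W, f w) ^ s / (n:ℝ) ^ (s-1) := by
    rw [le_div_iff₀ (by positivity)]
    have h1 : ((n:ℝ) * X) ^ s ≤ (∑ w ∈ W, f w) ^ s :=
      pow_le_pow_left₀ (by positivity) hsumf s
    calc (n:ℝ) * X ^ s * (n:ℝ)^(s-1) = ((n:ℝ)^(s-1) * (n:ℝ)) * X^s := by ring
      _ = (n:ℝ)^(s-1+1) * X^s := by rw [pow_succ]
      _ = (n:ℝ)^s * X^s := by rw [Nat.sub_add_cancel (by omega : 1 ≤ s)]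
      _ = ((n:ℝ) * X)^s := (mul_pow _ _ _).symm
      _ ≤ _ := h1
  have hA : ∑ w ∈ W, f w ^ s ≤ ((s:ℝ)-1) * (m:ℝ)^s := by
    have h1 : ∑ w ∈ W, f w ^ s ≤ ∑ w ∈ W, (s.factorial:ℝ) * ((d w).choose s : ℝ) :=
      Finset.sum_le_sum fun w _ => hchoose_lb w
    have h2 : s.factorial * (∑ w ∈ W, (d w).choose s) ≤ (s-1) * m ^ s := by
      calc s.factorial * (∑ w ∈ W, (d w).choose s)
          ≤ s.factorial * ((s-1) * m.choose s) := Nat.mul_le_mul_left _ hkey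
        _ = (s-1) * (s.factorial * m.choose s) := by ring
        _ = (s-1) * m.descFactorial s := by rw [← Nat.descFactorial_eq_factorial_mul_choose]
        _ ≤ (s-1) * m^s := Nat.mul_le_mul_left _ (Nat.descFactorial_le_pow _ _)
    have h2' : (s.factorial:ℝ) * (∑ w ∈ W, ((d w).choose s :ℝ)) ≤ ((s:ℝ)-1) * (m:ℝ)^s := by
      have h3 := (Nat.cast_le (α := ℝ)).2 h2
      push_cast [Nat.cast_sub (by omega : 1 ≤ s)] at h3
      convert h3 using 2
    rw [← Finset.mul_sum] at h1
    linarith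
  have hfinal : (n:ℝ) * X^s ≤ ((s:ℝ)-1) * (m:ℝ)^s := le_trans hL (le_trans hjensen hA)
  have hmX : (m:ℝ) ≤ 2/c * X := by
    have h4 : c * (m:ℝ) ≤ 2 * X := by rw [hX]; nlinarith
    rw [div_mul_eq_mul_div, le_div_iff₀ hc0, mul_comm]
    linarith
  have hXs : (0:ℝ) < X ^ s := pow_pos hXpos s
  have hmpow : (m:ℝ)^s ≤ (2/c)^s * X^s := by
    calc (m:ℝ)^s ≤ (2/c * X)^s := pow_le_pow_left₀ (by positivity) hmX s
      _ = (2/c)^s * X^s := mul_pow _ _ _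
  have h5 : (n:ℝ) ≤ ((s:ℝ)-1) * (2/c)^s := by
    have h6 : (n:ℝ) * X^s ≤ (((s:ℝ)-1) * (2/c)^s) * X^s := by
      calc (n:ℝ) * X^s ≤ ((s:ℝ)-1) * (m:ℝ)^s := hfinal
        _ ≤ ((s:ℝ)-1) * ((2/c)^s * X^s) :=
            mul_le_mul_of_nonneg_left hmpow (by linarith)
        _ = (((s:ℝ)-1) * (2/c)^s) * X^s := by ring
    exact le_of_mul_le_mul_right h6 hXs
  nlinarith [hW, h5, hpow]
end

section
/- Let s be a positive integer. If H is a K_{s,s}-free bipartite graph with parts X and Y, each of size m, then e(H) ≤ (s-1)^{1/s} m^{2-1/s} + (s-1)m. -/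
/-!
Double count the pairs `(y, S)` with `y ∈ Y` and `S` an `s`-subset of the neighbourhood of `y`:
since no `s`-subset of `X` has `s` common neighbours, `∑_y C(d y, s) ≤ (s - 1) C(m, s)`.
As `(d - s + 1)^s ≤ s! C(d, s)`, this gives `∑_y (d y - s + 1)₊^s ≤ (s - 1) m^s`, and the power
mean inequality turns it into `∑_y (d y - s + 1) ≤ (s - 1)^(1/s) m^(2 - 1/s)`; the degrees over
`Y` sum to `e(H)`.
-/

open Finset

theorem Nat.sum_pow_add_one_sub_le_of_sum_choose_le {ι : Type*} {t : Finset ι} {d : ι → ℕ}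
    {s k m : ℕ} (h : ∑ i ∈ t, (d i).choose s ≤ k * m.choose s) :
    ∑ i ∈ t, (d i + 1 - s) ^ s ≤ k * m ^ s :=
  calc ∑ i ∈ t, (d i + 1 - s) ^ s
      ≤ ∑ i ∈ t, (d i).descFactorial s := sum_le_sum fun i _ ↦ Nat.pow_sub_le_descFactorial _ _
    _ = s.factorial * ∑ i ∈ t, (d i).choose s := by
        simp only [Nat.descFactorial_eq_factorial_mul_choose, mul_sum]
    _ ≤ s.factorial * (k * m.choose s) := by gcongr
    _ = k * m.descFactorial s := by rw [Nat.descFactorial_eq_factorial_mul_choose]; ring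
    _ ≤ k * m ^ s := by gcongr; exact Nat.descFactorial_le_pow _ _

theorem Finset.sum_le_rpow_mul_card_rpow_of_sum_pow_le {ι : Type*} {t : Finset ι} {c : ι → ℝ}
    (hc : ∀ i ∈ t, 0 ≤ c i) {s : ℕ} (hs : s ≠ 0) {a : ℝ} (ha : 0 ≤ a)
    (h : ∑ i ∈ t, c i ^ s ≤ a * (#t : ℝ) ^ s) :
    ∑ i ∈ t, c i ≤ a ^ ((1 : ℝ) / s) * (#t : ℝ) ^ ((2 : ℝ) - 1 / s) := by
  obtain ⟨n, rfl⟩ : ∃ n, s = n + 1 := ⟨s - 1, by omega⟩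
  have hjensen : (∑ i ∈ t, c i) ^ (n + 1) ≤ a * (#t : ℝ) ^ (2 * n + 1) :=
    calc (∑ i ∈ t, c i) ^ (n + 1) ≤ (#t : ℝ) ^ n * ∑ i ∈ t, c i ^ (n + 1) :=
          pow_sum_le_card_mul_sum_pow hc n
      _ ≤ (#t : ℝ) ^ n * (a * (#t : ℝ) ^ (n + 1)) := by gcongr
      _ = a * (#t : ℝ) ^ (2 * n + 1) := by ring
  refine le_of_pow_le_pow_left₀ hs (by positivity) (hjensen.trans_eq ?_)
  have hexp : ((2 : ℝ) - ((n + 1 : ℕ) : ℝ)⁻¹) * (n + 1 : ℕ) = (2 * n + 1 : ℕ) := by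
    push_cast; field_simp; ring
  rw [one_div, mul_pow, Real.rpow_inv_natCast_pow ha hs, ← Real.rpow_mul_natCast (by positivity),
    hexp, Real.rpow_natCast]

namespace SimpleGraph

variable {V : Type*} [Fintype V] {G : SimpleGraph V} [DecidableRel G.Adj] {X Y : Finset V}

theorem IsBipartiteWith.card_edgeFinset_sub_le_sum (h : G.IsBipartiteWith X Y) (s : ℕ) :
    (#G.edgeFinset : ℝ) - ((s : ℝ) - 1) * #Y ≤ ∑ y ∈ Y, ((G.degree y + 1 - s : ℕ) : ℝ) := by
  rw [← isBipartiteWith_sum_degrees_eq_card_edges' h, Nat.cast_sum, mul_comm, ← nsmul_eq_mul,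
    ← sum_const, ← sum_sub_distrib]
  refine sum_le_sum fun y _ ↦ ?_
  have : (G.degree y : ℝ) + 1 ≤ ((G.degree y + 1 - s : ℕ) : ℝ) + s := by
    exact_mod_cast (le_tsub_add : G.degree y + 1 ≤ (G.degree y + 1 - s) + s)
  linarith

variable [DecidableEq V] {s : ℕ}

theorem IsBipartiteWith.sum_choose_degree_eq_sum_card_commonNeighbors
    (h : G.IsBipartiteWith X Y) (s : ℕ) :
    ∑ y ∈ Y, (G.degree y).choose s =
      ∑ S ∈ X.powersetCard s, #{y ∈ Y | S ⊆ G.neighborFinset y} := by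
  have hdeg : ∀ y ∈ Y,
      (G.degree y).choose s = #{S ∈ X.powersetCard s | S ⊆ G.neighborFinset y} := by
    intro y hy
    have hN := isBipartiteWith_neighborFinset_subset' h hy
    rw [← card_neighborFinset_eq_degree, ← card_powersetCard]
    congr 1
    ext S
    simp only [mem_filter, mem_powersetCard]
    exact ⟨fun ⟨hS, hcard⟩ ↦ ⟨⟨hS.trans hN, hcard⟩, hS⟩, fun ⟨⟨_, hcard⟩, hS⟩ ↦ ⟨hS, hcard⟩⟩
  rw [sum_congr rfl hdeg]
  simp only [card_filter]
  exact sum_comm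

theorem card_commonNeighbors_lt
    (hfree : ¬ ∃ (A B : Finset V), A ⊆ X ∧ B ⊆ Y ∧ #A = s ∧ #B = s ∧
      ∀ a ∈ A, ∀ b ∈ B, G.Adj a b)
    {S : Finset V} (hSX : S ⊆ X) (hS : #S = s) :
    #{y ∈ Y | S ⊆ G.neighborFinset y} < s := by
  by_contra! hle
  obtain ⟨B, hB, hBcard⟩ := exists_subset_card_eq hle
  refine hfree ⟨S, B, hSX, hB.trans (filter_subset _ _), hS, hBcard, fun a ha b hb ↦ ?_⟩
  exact ((mem_neighborFinset _ _ _).1 ((mem_filter.1 (hB hb)).2 ha)).symm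

theorem IsBipartiteWith.sum_choose_degree_le (h : G.IsBipartiteWith X Y)
    (hfree : ¬ ∃ (A B : Finset V), A ⊆ X ∧ B ⊆ Y ∧ #A = s ∧ #B = s ∧
      ∀ a ∈ A, ∀ b ∈ B, G.Adj a b) :
    ∑ y ∈ Y, (G.degree y).choose s ≤ (s - 1) * (#X).choose s :=
  calc ∑ y ∈ Y, (G.degree y).choose s
      = ∑ S ∈ X.powersetCard s, #{y ∈ Y | S ⊆ G.neighborFinset y} :=
        h.sum_choose_degree_eq_sum_card_commonNeighbors s
    _ ≤ ∑ _S ∈ X.powersetCard s, (s - 1) := sum_le_sum fun S hS ↦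
        Nat.le_sub_one_of_lt (card_commonNeighbors_lt hfree (mem_powersetCard.1 hS).1
          (mem_powersetCard.1 hS).2)
    _ = (s - 1) * (#X).choose s := by rw [sum_const, card_powersetCard, smul_eq_mul, mul_comm]

end SimpleGraph

theorem stmt_2_general {V : Type*} [Fintype V] [DecidableEq V]
    (H : SimpleGraph V) [DecidableRel H.Adj]
    (X Y : Finset V) (hdisj : Disjoint X Y)
    (hbip : ∀ u v, H.Adj u v → (u ∈ X ∧ v ∈ Y) ∨ (u ∈ Y ∧ v ∈ X))
    (m s : ℕ) (hs : 1 ≤ s) (hX : X.card = m) (hY : Y.card = m)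
    (hfree : ¬ ∃ (A B : Finset V), A ⊆ X ∧ B ⊆ Y ∧ A.card = s ∧ B.card = s ∧
      ∀ a ∈ A, ∀ b ∈ B, H.Adj a b) :
    (H.edgeFinset.card : ℝ) ≤
      ((s : ℝ) - 1) ^ ((1 : ℝ) / s) * (m : ℝ) ^ ((2 : ℝ) - 1 / s) + ((s : ℝ) - 1) * m := by
  have hH : H.IsBipartiteWith X Y := ⟨disjoint_coe.2 hdisj, hbip⟩
  let c : V → ℝ := fun y ↦ ((H.degree y + 1 - s : ℕ) : ℝ)
  have hpow : ∑ y ∈ Y, c y ^ s ≤ ((s : ℝ) - 1) * (#Y : ℝ) ^ s := by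
    have hnat := Nat.sum_pow_add_one_sub_le_of_sum_choose_le (hH.sum_choose_degree_le hfree)
    rw [hX, ← hY] at hnat
    have hreal := (Nat.cast_le (α := ℝ)).2 hnat
    push_cast [Nat.cast_pred hs] at hreal
    exact hreal
  have hedges := hH.card_edgeFinset_sub_le_sum s
  have hbound := sum_le_rpow_mul_card_rpow_of_sum_pow_le (fun y _ ↦ Nat.cast_nonneg _)
    (by omega) (sub_nonneg.2 (by exact_mod_cast hs)) hpow
  rw [hY] at hbound hedges
  linarith

/-- the Kővári–Sós–Turán theorem. -/
theorem stmt_2 {V : Type*} [Fintype V] [DecidableEq V]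
    (H : SimpleGraph V) [DecidableRel H.Adj]
    (X Y : Finset V) (hdisj : Disjoint X Y) (hcover : X ∪ Y = Finset.univ)
    (hbip : ∀ u v, H.Adj u v → (u ∈ X ∧ v ∈ Y) ∨ (u ∈ Y ∧ v ∈ X))
    (m s : ℕ) (hs : 1 ≤ s) (hX : X.card = m) (hY : Y.card = m)
    (hfree : ¬ ∃ (A B : Finset V), A ⊆ X ∧ B ⊆ Y ∧ A.card = s ∧ B.card = s ∧
      ∀ a ∈ A, ∀ b ∈ B, H.Adj a b) :
    (H.edgeFinset.card : ℝ) ≤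
      ((s : ℝ) - 1) ^ ((1 : ℝ) / s) * (m : ℝ) ^ ((2 : ℝ) - 1 / s) + ((s : ℝ) - 1) * m :=
  stmt_2_general H X Y hdisj hbip m s hs hX hY hfree
end

section
/- Let ℓ, s be positive integers and T a tree with leaf set R. There exists a constant λ = λ(T, ℓ) such that: if G is a K_{s,s}-free graph and G contains a semi-induced copy of T_R^λ (λ copies of T, each induced in G, agreeing on the images of R and pairwise vertex-disjoint outside R), then among these λ copies there are ℓ copies that together form an induced subgraph of G isomorphic to T_R^ℓ. -/
open Finset

namespace Finset

variable {ι κ : Type*} [LinearOrder ι] [Fintype κ] [Nonempty κ]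

/- Greedy: take the least element `a` of `A`, keep the largest colour class of the pairs `(a, b)`,
and recurse inside it. -/
theorem exists_strictMono_color_eq_left (c : ι → ι → κ) (t : ℕ) {A : Finset ι}
    (hA : (Fintype.card κ + 1) ^ t ≤ #A) :
    ∃ v : Fin t → ι, StrictMono v ∧ (∀ i, v i ∈ A) ∧
      ∃ col : Fin t → κ, ∀ i j, i < j → c (v i) (v j) = col i := by
  classical
  induction t generalizing A with
  | zero => exact ⟨Fin.elim0, fun i => i.elim0, fun i => i.elim0, Fin.elim0, fun i => i.elim0⟩
  | succ t ih =>
    set k := Fintype.card κ with hk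
    have hA0 : A.Nonempty := card_pos.mp (lt_of_lt_of_le (by positivity) hA)
    set a := A.min' hA0
    obtain ⟨x, -, hx⟩ : ∃ x ∈ (univ : Finset κ), (k + 1) ^ t ≤ #{b ∈ A.erase a | c a b = x} := by
      refine exists_le_card_fiber_of_mul_le_card_of_maps_to (fun _ _ => mem_univ _)
        univ_nonempty ?_
      have : k * (k + 1) ^ t + 1 ≤ (k + 1) ^ (t + 1) := by
        rw [pow_succ]; nlinarith [Nat.one_le_pow t (k + 1) (by omega)]
      rw [card_univ, ← hk, card_erase_of_mem (A.min'_mem hA0)]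
      omega
    obtain ⟨v, hv, hvA, col, hcol⟩ := ih hx
    have hv' : ∀ i, v i ∈ A.erase a ∧ c a (v i) = x := fun i => mem_filter.mp (hvA i)
    have ha_lt : ∀ i, a < v i := fun i =>
      (A.min'_le _ (mem_of_mem_erase (hv' i).1)).lt_of_ne (ne_of_mem_erase (hv' i).1).symm
    refine ⟨Fin.cons a v, ?_, Fin.cases (A.min'_mem hA0) fun i => mem_of_mem_erase (hv' i).1,
      Fin.cons x col, ?_⟩
    · intro i j hij
      induction j using Fin.cases with
      | zero => exact absurd hij (Fin.not_lt_zero i)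
      | succ j =>
        induction i using Fin.cases with
        | zero => exact ha_lt j
        | succ i => exact hv (Fin.succ_lt_succ_iff.mp hij)
    · intro i j hij
      induction j using Fin.cases with
      | zero => exact absurd hij (Fin.not_lt_zero i)
      | succ j =>
        induction i using Fin.cases with
        | zero => exact (hv' j).2
        | succ i => exact hcol i j (Fin.succ_lt_succ_iff.mp hij)

theorem exists_monochromatic_subset_of_pow_le_card (m : ℕ) (A : Finset ι)
    (hA : (Fintype.card κ + 1) ^ (Fintype.card κ * (m - 1) + 1) ≤ #A) (c : ι → ι → κ) :
    ∃ S ⊆ A, #S = m ∧ ∃ col, ∀ i ∈ S, ∀ j ∈ S, i < j → c i j = col := by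
  classical
  obtain ⟨v, hv, hvA, col, hcol⟩ := exists_strictMono_color_eq_left c _ hA
  obtain ⟨x, hx⟩ : ∃ x, m - 1 < #{i | col i = x} :=
    Fintype.exists_lt_card_fiber_of_mul_lt_card col (by simp)
  obtain ⟨S, hSx, hS⟩ := exists_subset_card_eq (show m ≤ #{i | col i = x} by omega)
  refine ⟨S.map ⟨v, hv.injective⟩, ?_, by simp [hS], x, ?_⟩
  · intro a ha
    obtain ⟨i, -, rfl⟩ := mem_map.mp ha
    exact hvA i
  · simp only [mem_map, Function.Embedding.coeFn_mk]
    rintro _ ⟨i, hi, rfl⟩ _ ⟨j, -, rfl⟩ hij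
    rw [hcol i j (hv.lt_iff_lt.mp hij)]
    exact (mem_filter.mp (hSx hi)).2

theorem exists_subsets_lt_of_add_le_card {S : Finset ι} {a b : ℕ} (h : a + b ≤ #S) :
    ∃ I ⊆ S, ∃ J ⊆ S, #I = a ∧ #J = b ∧ ∀ x ∈ I, ∀ y ∈ J, x < y := by
  obtain ⟨S', hS'S, hS'⟩ := exists_subset_card_eq h
  set e := S'.orderEmbOfFin hS'
  have he : ∀ i, e i ∈ S := fun i => hS'S (S'.orderEmbOfFin_mem hS' i)
  refine ⟨univ.map ((Fin.castAddEmb b).trans e.toEmbedding), ?_,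
    univ.map ((Fin.natAddEmb a).trans e.toEmbedding), ?_, by simp, by simp, ?_⟩
  any_goals
    intro x hx
    obtain ⟨i, -, rfl⟩ := mem_map.mp hx
    exact he _
  · simp only [mem_map]
    rintro _ ⟨i, -, rfl⟩ _ ⟨j, -, rfl⟩
    exact e.strictMono (by simp [Fin.lt_def]; omega)

end Finset

section Copies

variable {α ι V : Type*} {G : SimpleGraph V} {R : Set α} {f : ι → α → V}

open Classical in
noncomputable def nonRootEdge (G : SimpleGraph V) (R : Set α) (f : ι → α → V) (i j : ι) :
    Option (α × α) :=
  if h : ∃ p : α × α, p.1 ∉ R ∧ p.2 ∉ R ∧ G.Adj (f i p.1) (f j p.2) then some h.choose else none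

theorem nonRootEdge_eq_none_iff {i j : ι} :
    nonRootEdge G R f i j = none ↔ ∀ u ∉ R, ∀ v ∉ R, ¬ G.Adj (f i u) (f j v) := by
  unfold nonRootEdge
  split_ifs with h
  · simp only [false_iff, not_forall, not_not, exists_prop]
    exact ⟨_, h.choose_spec.1, _, h.choose_spec.2.1, h.choose_spec.2.2⟩
  · simpa [Prod.exists] using h

theorem nonRootEdge_eq_some {i j : ι} {p : α × α} (h : nonRootEdge G R f i j = some p) :
    p.1 ∉ R ∧ p.2 ∉ R ∧ G.Adj (f i p.1) (f j p.2) := by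
  unfold nonRootEdge at h
  split_ifs at h with hex
  exact Option.some_inj.mp h ▸ hex.choose_spec

theorem adj_of_forall_nonRootEdge_eq_none [LinearOrder ι] {F : SimpleGraph α} {S : Finset ι}
    (hind : ∀ i u v, G.Adj (f i u) (f i v) ↔ F.Adj u v)
    (hroot : ∀ i j r, r ∈ R → f i r = f j r)
    (hS : ∀ i ∈ S, ∀ j ∈ S, i < j → nonRootEdge G R f i j = none)
    {i j : ι} (hi : i ∈ S) (hj : j ∈ S) (hij : i ≠ j) {u v : α} (h : G.Adj (f i u) (f j v)) :
    (u ∈ R ∨ v ∈ R) ∧ F.Adj u v := by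
  have hroot_mem : u ∈ R ∨ v ∈ R := by
    by_contra! huv
    rcases hij.lt_or_gt with hlt | hlt
    · exact nonRootEdge_eq_none_iff.mp (hS i hi j hj hlt) u huv.1 v huv.2 h
    · exact nonRootEdge_eq_none_iff.mp (hS j hj i hi hlt) v huv.2 u huv.1 h.symm
  refine ⟨hroot_mem, ?_⟩
  rcases hroot_mem with hu | hv
  · rwa [hroot i j u hu, hind] at h
  · rwa [← hroot i j v hv, hind] at h

theorem not_kssFree_of_forall_adj {s : ℕ} {I J : Finset ι} (hI : #I = s) (hJ : #J = s)
    (hIJ : Disjoint I J) (hdisj : ∀ i j w w', i ≠ j → f i w = f j w' → w ∈ R)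
    {u v : α} (hu : u ∉ R) (hv : v ∉ R) (hadj : ∀ i ∈ I, ∀ j ∈ J, G.Adj (f i u) (f j v)) :
    ¬ KssFree s G := by
  classical
  have hinj : ∀ w ∉ R, Function.Injective (f · w) := fun w hw i j h =>
    by_contra fun hij => hw (hdisj i j w w hij h)
  refine not_not.mpr ⟨I.image (f · u), J.image (f · v), ?_, ?_, ?_, ?_⟩
  · rw [card_image_of_injective _ (hinj u hu), hI]
  · rw [card_image_of_injective _ (hinj v hv), hJ]
  · simp only [disjoint_left, mem_image, not_exists, not_and]
    rintro _ ⟨i, hi, rfl⟩ j hj h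
    exact hu (hdisj i j u v (fun e => disjoint_left.mp hIJ hi (e ▸ hj)) h.symm)
  · simp only [mem_image]
    rintro _ ⟨i, hi, rfl⟩ _ ⟨j, hj, rfl⟩
    exact hadj i hi j hj

theorem not_kssFree_of_forall_nonRootEdge_eq_some [LinearOrder ι] {s : ℕ} (hs : 1 ≤ s)
    {S : Finset ι} (hS : 2 * s ≤ #S) (hdisj : ∀ i j w w', i ≠ j → f i w = f j w' → w ∈ R)
    {p : α × α} (hcol : ∀ i ∈ S, ∀ j ∈ S, i < j → nonRootEdge G R f i j = some p) :
    ¬ KssFree s G := by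
  obtain ⟨I, hIS, J, hJS, hI, hJ, hIJ⟩ := exists_subsets_lt_of_add_le_card (a := s) (b := s)
    (show s + s ≤ #S by omega)
  have hedge : ∀ i ∈ I, ∀ j ∈ J, p.1 ∉ R ∧ p.2 ∉ R ∧ G.Adj (f i p.1) (f j p.2) :=
    fun i hi j hj => nonRootEdge_eq_some (hcol i (hIS hi) j (hJS hj) (hIJ i hi j hj))
  obtain ⟨i, hi⟩ := card_pos.mp (hI ▸ hs)
  obtain ⟨j, hj⟩ := card_pos.mp (hJ ▸ hs)
  exact not_kssFree_of_forall_adj hI hJ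
    (disjoint_left.mpr fun i hi hi' => (hIJ i hi i hi').false) hdisj (hedge i hi j hj).1
    (hedge i hi j hj).2.1 fun i hi j hj => (hedge i hi j hj).2.2

end Copies

theorem stmt_4_general {α : Type} [Fintype α] (ℓ s : ℕ) (hs : 1 ≤ s) (T : SimpleGraph α) (R : Set α) :
    ∃ lam : ℕ, ∀ (V : Type) (_ : Fintype V) (_ : DecidableEq V) (G : SimpleGraph V),
      KssFree s G →
      ∀ f : Fin lam → α → V,
        (∀ i, Function.Injective (f i)) →
        -- each copy is an induced copy of `T` in `G`
        (∀ i u v, G.Adj (f i u) (f i v) ↔ T.Adj u v) →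
        -- the copies agree on the images of the roots `R`
        (∀ i j r, r ∈ R → f i r = f j r) →
        -- the copies are pairwise vertex disjoint outside the common image of `R`
        (∀ i j u v, i ≠ j → f i u = f j v → u ∈ R ∧ v ∈ R ∧ u = v) →
        ∃ S : Finset (Fin lam), S.card = ℓ ∧
          -- the chosen `ℓ` copies form a copy of `T_R^ℓ` that is induced in `G`
          ∀ i ∈ S, ∀ j ∈ S, i ≠ j → ∀ u v, G.Adj (f i u) (f j v) →
            (u ∈ R ∨ v ∈ R) ∧ T.Adj u v := by
  let k := Fintype.card (Option (α × α))
  refine ⟨(k + 1) ^ (k * (ℓ + 2 * s - 1) + 1), fun V _ _ G hG f _ hind hroot hdisj => ?_⟩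
  obtain ⟨S, -, hS, col, hcol⟩ := exists_monochromatic_subset_of_pow_le_card (ℓ + 2 * s) univ
    (by rw [card_univ, Fintype.card_fin]) (nonRootEdge G R f)
  cases col with
  | none =>
    obtain ⟨S', hS'S, hS'⟩ := exists_subset_card_eq (show ℓ ≤ #S by omega)
    exact ⟨S', hS', fun i hi j hj hij u v => adj_of_forall_nonRootEdge_eq_none hind hroot
      (fun i hi j hj => hcol i (hS'S hi) j (hS'S hj)) hi hj hij⟩
  | some p =>
    exact absurd hG (not_kssFree_of_forall_nonRootEdge_eq_some hs (show 2 * s ≤ #S by omega)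
      (fun i j u v hij h => (hdisj i j u v hij h).1) hcol)

/-- a semi-induced copy of `T_R^λ` in a `K_{s,s}`-free graph contains
an induced copy of `T_R^ℓ`, where `R` is the set of leaves of the tree `T`. -/
theorem stmt_4 {α : Type} [Fintype α] [DecidableEq α] (ℓ s : ℕ) (hℓ : 1 ≤ ℓ) (hs : 1 ≤ s)
    (T : SimpleGraph α) [DecidableRel T.Adj] (hT : T.IsTree)
    (R : Set α) (hR : ∀ v, v ∈ R ↔ T.degree v = 1) :
    ∃ lam : ℕ, ∀ (V : Type) (_ : Fintype V) (_ : DecidableEq V) (G : SimpleGraph V),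
      KssFree s G →
      ∀ f : Fin lam → α → V,
        (∀ i, Function.Injective (f i)) →
        -- each copy is an induced copy of `T` in `G`
        (∀ i u v, G.Adj (f i u) (f i v) ↔ T.Adj u v) →
        -- the copies agree on the images of the roots `R`
        (∀ i j r, r ∈ R → f i r = f j r) →
        -- the copies are pairwise vertex disjoint outside the common image of `R`
        (∀ i j u v, i ≠ j → f i u = f j v → u ∈ R ∧ v ∈ R ∧ u = v) →
        ∃ S : Finset (Fin lam), S.card = ℓ ∧
          -- the chosen `ℓ` copies form a copy of `T_R^ℓ` that is induced in `G`
          ∀ i ∈ S, ∀ j ∈ S, i ≠ j → ∀ u v, G.Adj (f i u) (f j v) →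
            (u ∈ R ∨ v ∈ R) ∧ T.Adj u v :=
  stmt_4_general ℓ s hs T R
end

section
/- Let s ≥ 2 be an integer, G a K_{s,s}-free graph, and h ≥ 1. For every set W ⊆ V(G) with |W| ≥ s·(4h)^s, the set B(W) of vertices outside W with at least |W|/(2h) neighbors in W (in G) has size at most 4sh. -/
open Finset

lemma pow_sub_le_descFactorial (d : ℕ) : ∀ s : ℕ, (d - (s - 1)) ^ s ≤ d.descFactorial s
  | 0 => le_refl 1
  | (s + 1) => by
    rw [Nat.descFactorial_succ, pow_succ, Nat.add_sub_cancel]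
    calc (d - s) ^ s * (d - s) ≤ (d - (s - 1)) ^ s * (d - s) := by
          gcongr
          omega
      _ ≤ d.descFactorial s * (d - s) := by
          gcongr
          exact pow_sub_le_descFactorial d s
      _ = (d - s) * d.descFactorial s := Nat.mul_comm _ _

/-- the small bad set lemma with threshold `|W|/(2h)`. -/
theorem stmt_6 {V : Type*} [Fintype V] [DecidableEq V]
    (G : SimpleGraph V) [DecidableRel G.Adj]
    (s h : ℕ) (hs : 2 ≤ s) (hh : 1 ≤ h) (hG : KssFree s G)
    (W : Finset V) (hW : s * (4 * h) ^ s ≤ W.card)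
    (B : Finset V)
    (hB : ∀ x, x ∈ B ↔ x ∉ W ∧
      (W.card : ℝ) / (2 * h) ≤ ((W.filter (fun w => G.Adj x w)).card : ℝ)) :
    B.card ≤ 4 * s * h := by
  by_contra hcon
  push_neg at hcon
  set t : ℕ := 4 * s * h + 1 with ht
  obtain ⟨B', hB'sub, hB'card⟩ : ∃ B' ⊆ B, B'.card = t := exists_subset_card_eq hcon
  set w : ℕ := W.card with hw
  have hwpos : 0 < w := by
    have : 0 < s * (4 * h) ^ s := by positivity
    omega
  set d : V → ℕ := fun x => (B'.filter (fun b => G.Adj x b)).card with hd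
  have hdeg : ∀ b ∈ B', w ≤ (W.filter (fun x => G.Adj b x)).card * (2 * h) := by
    intro b hb
    have h2 := ((hB b).mp (hB'sub hb)).2
    have hpos : (0 : ℝ) < 2 * h := by
      have : (1 : ℝ) ≤ (h : ℝ) := by exact_mod_cast hh
      linarith
    rw [div_le_iff₀ hpos] at h2
    exact_mod_cast h2
  have hsumd : t * w ≤ 2 * h * ∑ x ∈ W, d x := by
    have hswap : ∑ x ∈ W, d x = ∑ b ∈ B', (W.filter (fun x => G.Adj b x)).card := by
      simp only [hd, Finset.card_filter]
      rw [Finset.sum_comm]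
      congr 1
      ext b
      congr 1
      ext x
      simp [G.adj_comm]
    rw [hswap, Finset.mul_sum]
    calc t * w = ∑ _b ∈ B', w := by rw [Finset.sum_const, hB'card, smul_eq_mul, Nat.mul_comm]
      _ ≤ ∑ b ∈ B', 2 * h * (W.filter (fun x => G.Adj b x)).card := by
          apply Finset.sum_le_sum
          intro b hb
          rw [Nat.mul_comm]
          exact hdeg b hb
  -- key upper bound via Kss-freeness
  have hkey : ∑ x ∈ W, (d x).choose s ≤ (s - 1) * t.choose s := by
    have h1 : ∀ x, (d x).choose s =
        ((B'.powersetCard s).filter (fun S => ∀ b ∈ S, G.Adj x b)).card := by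
      intro x
      rw [← Finset.card_powersetCard]
      congr 1
      ext S
      simp only [Finset.mem_powersetCard, Finset.mem_filter]
      constructor
      · rintro ⟨hsub, hcard⟩
        exact ⟨⟨fun a ha => (Finset.mem_filter.mp (hsub ha)).1, hcard⟩,
          fun b hb => (Finset.mem_filter.mp (hsub hb)).2⟩
      · rintro ⟨⟨hsub, hcard⟩, hadj⟩
        exact ⟨fun a ha => Finset.mem_filter.mpr ⟨hsub ha, hadj a ha⟩, hcard⟩
    have h2 : ∑ x ∈ W, (d x).choose s
        = ∑ S ∈ B'.powersetCard s, (W.filter (fun x => ∀ b ∈ S, G.Adj x b)).card := by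
      simp_rw [h1, Finset.card_filter]
      exact Finset.sum_comm
    rw [h2]
    have h3 : ∀ S ∈ B'.powersetCard s,
        (W.filter (fun x => ∀ b ∈ S, G.Adj x b)).card ≤ s - 1 := by
      intro S hS
      by_contra hc
      push_neg at hc
      obtain ⟨hSsub, hScard⟩ := Finset.mem_powersetCard.mp hS
      have hge : s ≤ (W.filter (fun x => ∀ b ∈ S, G.Adj x b)).card := by omega
      obtain ⟨C, hCsub, hCcard⟩ := Finset.exists_subset_card_eq hge
      apply hG
      refine ⟨S, C, hScard, hCcard, ?_, ?_⟩
      · rw [Finset.disjoint_left]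
        intro a haS haC
        have haB : a ∈ B := hB'sub (hSsub haS)
        have haW : a ∈ W := (Finset.mem_filter.mp (hCsub haC)).1
        exact ((hB a).mp haB).1 haW
      · intro a ha c hc
        exact ((Finset.mem_filter.mp (hCsub hc)).2 a ha).symm
    calc ∑ S ∈ B'.powersetCard s, (W.filter (fun x => ∀ b ∈ S, G.Adj x b)).card
        ≤ ∑ _S ∈ B'.powersetCard s, (s - 1) := Finset.sum_le_sum h3
      _ = (t.choose s) * (s - 1) := by
          rw [Finset.sum_const, Finset.card_powersetCard, hB'card, smul_eq_mul]
      _ = (s - 1) * t.choose s := Nat.mul_comm _ _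
  -- truncated degrees
  set e : V → ℕ := fun x => d x - (s - 1) with he
  have hsume : w * (s + 1) ≤ ∑ x ∈ W, e x := by
    have h1 : ∑ x ∈ W, d x ≤ (∑ x ∈ W, e x) + w * (s - 1) := by
      calc ∑ x ∈ W, d x ≤ ∑ x ∈ W, (e x + (s - 1)) := by
            apply Finset.sum_le_sum; intro x _; simp only [he]; omega
        _ = (∑ x ∈ W, e x) + w * (s - 1) := by
            rw [Finset.sum_add_distrib, Finset.sum_const, smul_eq_mul]
    have h2 : 2 * h * (w * (s + 1)) ≤ 2 * h * ∑ x ∈ W, e x := by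
      set E := ∑ x ∈ W, e x with hE
      set D := ∑ x ∈ W, d x with hD
      have hDle : 2 * h * D ≤ 2 * h * E + 2 * h * (w * (s - 1)) := by
        calc 2 * h * D ≤ 2 * h * (E + w * (s - 1)) := Nat.mul_le_mul_left _ h1
          _ = 2 * h * E + 2 * h * (w * (s - 1)) := by ring
      set s1 := s - 1 with hs1d
      have hseq : s = s1 + 1 := by omega
      rw [ht] at hsumd
      rw [hseq] at hsumd ⊢
      nlinarith [hsumd, hDle]
    exact Nat.le_of_mul_le_mul_left h2 (by positivity)
  -- sum of e^s upper bound
  have hsumes : ∑ x ∈ W, (e x) ^ s ≤ (s - 1) * t ^ s := by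
    calc ∑ x ∈ W, (e x) ^ s ≤ ∑ x ∈ W, (d x).descFactorial s := by
          apply Finset.sum_le_sum
          intro x _
          exact pow_sub_le_descFactorial (d x) s
      _ = ∑ x ∈ W, Nat.factorial s * (d x).choose s := by
          simp_rw [Nat.descFactorial_eq_factorial_mul_choose]
      _ = Nat.factorial s * ∑ x ∈ W, (d x).choose s := by rw [Finset.mul_sum]
      _ ≤ Nat.factorial s * ((s - 1) * t.choose s) := by gcongr
      _ = (s - 1) * (Nat.factorial s * t.choose s) := by ring
      _ = (s - 1) * t.descFactorial s := by rw [Nat.descFactorial_eq_factorial_mul_choose]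
      _ ≤ (s - 1) * t ^ s := by gcongr; exact Nat.descFactorial_le_pow t s
  -- power mean inequality over ℝ
  have hpm : (w * (s + 1)) ^ s ≤ w ^ (s - 1) * ((s - 1) * t ^ s) := by
    have hcast : ((∑ x ∈ W, e x : ℕ) : ℝ) ^ s
        ≤ (w : ℝ) ^ (s - 1) * ((∑ x ∈ W, (e x) ^ s : ℕ) : ℝ) := by
      push_cast
      obtain ⟨s', hs'⟩ : ∃ s', s = s' + 1 := ⟨s - 1, by omega⟩
      rw [hs', Nat.add_sub_cancel]
      have := pow_sum_le_card_mul_sum_pow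
        (s := W) (f := fun x => ((e x : ℕ) : ℝ)) (fun i _ => by positivity) s'
      simpa [hw] using this
    have hnat : (∑ x ∈ W, e x) ^ s ≤ w ^ (s - 1) * ∑ x ∈ W, (e x) ^ s := by
      exact_mod_cast hcast
    calc (w * (s + 1)) ^ s ≤ (∑ x ∈ W, e x) ^ s := by gcongr
      _ ≤ w ^ (s - 1) * ∑ x ∈ W, (e x) ^ s := hnat
      _ ≤ w ^ (s - 1) * ((s - 1) * t ^ s) := by gcongr
  -- derive w * (s+1)^s ≤ (s-1) * t^s
  have hfin : w * (s + 1) ^ s ≤ (s - 1) * t ^ s := by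
    have h1 : w ^ (s - 1) * (w * (s + 1) ^ s) ≤ w ^ (s - 1) * ((s - 1) * t ^ s) := by
      calc w ^ (s - 1) * (w * (s + 1) ^ s) = w ^ (s - 1 + 1) * (s + 1) ^ s := by ring
        _ = w ^ s * (s + 1) ^ s := by rw [show s - 1 + 1 = s from by omega]
        _ = (w * (s + 1)) ^ s := (mul_pow _ _ _).symm
        _ ≤ w ^ (s - 1) * ((s - 1) * t ^ s) := hpm
    exact Nat.le_of_mul_le_mul_left h1 (by positivity)
  -- contradiction with w ≥ s * (4h)^s
  have hbig : (s - 1) * t ^ s < w * (s + 1) ^ s := by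
    calc (s - 1) * t ^ s < s * t ^ s := by
          have h0 : 0 < t ^ s := by positivity
          exact mul_lt_mul_of_pos_right (by omega) h0
      _ ≤ s * (4 * h * (s + 1)) ^ s := by
          gcongr
          calc t = 4 * s * h + 1 := ht
            _ ≤ 4 * h * (s + 1) := by nlinarith
      _ = s * (4 * h) ^ s * (s + 1) ^ s := by rw [mul_pow, mul_assoc]
      _ ≤ w * (s + 1) ^ s := by gcongr
  exact Nat.lt_irrefl _ (lt_of_lt_of_le hbig hfin)
end

section
/- Let F be a graph and R a proper subset of V(F). For a nonempty S ⊆ V(F), let e_S be the number of edges of F incident to S and ρ_F(S) = e_S/|S|; set ρ(F) = ρ_F(V(F)\R). If (F, R) is balanced (i.e., ρ_F(S) ≥ ρ(F) for every nonempty S ⊆ V(F)\R) with ρ(F) = b/a, and F' = F(1) is obtained from F by adding two new vertices x, y with x adjacent to y and to all of B, and y adjacent to all of A (where (A,B) is the bipartition of F), with R' = R ∪ {x, y}, then (F', R') is balanced and ρ(F') = ρ(F) + 1 = (a+b)/a. -/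
open Finset

variable {V : Type*}

/-- The number of edges of `F` incident to a vertex of `S`. -/
noncomputable def incCount [Fintype V] (F : SimpleGraph V) (S : Finset V) : ℕ := by
  classical
  exact (F.edgeFinset.filter (fun e => ∃ v ∈ S, v ∈ e)).card

/-- `ρ_F(S) = e_S / |S|`. -/
noncomputable def rhoS [Fintype V] (F : SimpleGraph V) (S : Finset V) : ℝ :=
  (incCount F S : ℝ) / (S.card : ℝ)

/-- `(F, R)` is balanced if `ρ_F(S) ≥ ρ_F(V(F) \ R)` for every nonempty
`S ⊆ V(F) \ R`. -/
def IsBalanced [Fintype V] [DecidableEq V] (F : SimpleGraph V) (R : Finset V) : Prop :=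
  ∀ S : Finset V, S.Nonempty → S ⊆ Finset.univ \ R →
    rhoS F (Finset.univ \ R) ≤ rhoS F S

/-- `F(1)`: add a new edge `xy` (here `x = Sum.inr 0`, `y = Sum.inr 1`) to the bipartite
graph `F` with parts `(A, B)`, joining `x` to all of `B` and `y` to all of `A`. -/
def Fone (F : SimpleGraph V) (A B : Finset V) : SimpleGraph (V ⊕ Fin 2) :=
  SimpleGraph.fromRel (fun u v =>
    match u, v with
    | Sum.inl a, Sum.inl b => F.Adj a b
    | Sum.inl a, Sum.inr i => (i = 0 ∧ a ∈ B) ∨ (i = 1 ∧ a ∈ A)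
    | Sum.inr _, Sum.inl _ => False
    | Sum.inr i, Sum.inr j => i = 0 ∧ j = 1)

section Aux

set_option linter.unusedSectionVars false

lemma Fone_adj_ll (F : SimpleGraph V) (A B : Finset V) (x y : V) :
    (Fone F A B).Adj (Sum.inl x) (Sum.inl y) ↔ F.Adj x y := by
  simp only [Fone, SimpleGraph.fromRel_adj]
  constructor
  · rintro ⟨h, h1 | h1⟩
    · exact h1
    · exact h1.symm
  · intro h; exact ⟨by simp [h.ne], Or.inl h⟩

lemma Fone_adj_lr (F : SimpleGraph V) (A B : Finset V) (x : V) (i : Fin 2) :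
    (Fone F A B).Adj (Sum.inl x) (Sum.inr i) ↔ (i = 0 ∧ x ∈ B) ∨ (i = 1 ∧ x ∈ A) := by
  simp only [Fone, SimpleGraph.fromRel_adj]
  constructor
  · rintro ⟨h, h1 | h1⟩
    · exact h1
    · exact h1.elim
  · intro h; exact ⟨by simp, Or.inl h⟩

open scoped Classical in
lemma key_filter [Fintype V] [DecidableEq V] (F : SimpleGraph V) (A B : Finset V)
    (hAB : Disjoint A B) (hABU : A ∪ B = Finset.univ) (S : Finset V) :
    ((Fone F A B).edgeFinset.filter (fun e => ∃ v ∈ S.image Sum.inl, v ∈ e)) =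
      (F.edgeFinset.filter (fun e => ∃ v ∈ S, v ∈ e)).image (Sym2.map Sum.inl) ∪
      S.image (fun v => s(Sum.inl v, Sum.inr (if v ∈ B then (0 : Fin 2) else 1))) := by
  classical
  ext e
  induction e using Sym2.inductionOn with
  | hf u v =>
    simp only [mem_filter, SimpleGraph.mem_edgeFinset, SimpleGraph.mem_edgeSet,
      mem_union, mem_image, Sym2.mem_iff]
    constructor
    · rintro ⟨hadj, w, ⟨x, hxS, rfl⟩, hw | hw⟩
      all_goals cases u with
      | inl u' => cases v with
        | inl v' =>
          left
          refine ⟨s(u', v'), ?_, by simp⟩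
          rw [Fone_adj_ll] at hadj
          simp only [mem_filter, SimpleGraph.mem_edgeFinset, SimpleGraph.mem_edgeSet,
            Sym2.mem_iff]
          refine ⟨hadj, x, hxS, ?_⟩
          · first
            | (left; exact Sum.inl_injective hw)
            | (right; exact Sum.inl_injective hw)
        | inr i =>
          right
          rw [Fone_adj_lr] at hadj
          have hx : x = u' := by
            first
            | exact Sum.inl_injective hw
            | exact absurd hw (by simp)
          subst hx
          refine ⟨x, hxS, ?_⟩
          rcases hadj with ⟨hi, hB⟩ | ⟨hi, hA⟩
          · simp [hi, hB]
          · have hnB : x ∉ B := fun hxB => Finset.disjoint_left.mp hAB hA hxB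
            simp [hi, hnB]
      | inr i => cases v with
        | inl v' =>
          right
          rw [SimpleGraph.adj_comm, Fone_adj_lr] at hadj
          have hx : x = v' := by
            first
            | exact Sum.inl_injective hw
            | exact absurd hw (by simp)
          subst hx
          refine ⟨x, hxS, ?_⟩
          rcases hadj with ⟨hi, hB⟩ | ⟨hi, hA⟩
          · rw [Sym2.eq_swap]; simp [hi, hB]
          · have hnB : x ∉ B := fun hxB => Finset.disjoint_left.mp hAB hA hxB
            rw [Sym2.eq_swap]; simp [hi, hnB]
        | inr j => exact absurd hw (by simp)
    · rintro (⟨e', he', hmap⟩ | ⟨x, hxS, hpair⟩)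
      · induction e' using Sym2.inductionOn with
        | hf p q =>
          simp only [mem_filter, SimpleGraph.mem_edgeFinset, SimpleGraph.mem_edgeSet,
            Sym2.mem_iff] at he'
          obtain ⟨hadj, x, hxS, hx⟩ := he'
          rw [Sym2.map_pair_eq] at hmap
          rcases Sym2.eq_iff.mp hmap with ⟨rfl, rfl⟩ | ⟨rfl, rfl⟩
          · refine ⟨by rw [Fone_adj_ll]; exact hadj, Sum.inl x, ⟨x, hxS, rfl⟩, ?_⟩
            rcases hx with rfl | rfl
            · left; rfl
            · right; rfl
          · refine ⟨by rw [SimpleGraph.adj_comm, Fone_adj_ll]; exact hadj,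
              Sum.inl x, ⟨x, hxS, rfl⟩, ?_⟩
            rcases hx with rfl | rfl
            · right; rfl
            · left; rfl
      · have hadj2 : ((if x ∈ B then (0 : Fin 2) else 1) = 0 ∧ x ∈ B) ∨
            ((if x ∈ B then (0 : Fin 2) else 1) = 1 ∧ x ∈ A) := by
          by_cases hxB : x ∈ B
          · left; simp [hxB]
          · right
            have hxA : x ∈ A := by
              have := Finset.mem_univ x
              rw [← hABU, Finset.mem_union] at this
              tauto
            simp [hxB, hxA]
        rcases Sym2.eq_iff.mp hpair with ⟨rfl, rfl⟩ | ⟨rfl, rfl⟩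
        · exact ⟨by rw [Fone_adj_lr]; exact hadj2, Sum.inl x, ⟨x, hxS, rfl⟩, Or.inl rfl⟩
        · exact ⟨by rw [SimpleGraph.adj_comm, Fone_adj_lr]; exact hadj2,
            Sum.inl x, ⟨x, hxS, rfl⟩, Or.inr rfl⟩

open scoped Classical in
lemma incCount_Fone [Fintype V] [DecidableEq V] (F : SimpleGraph V) (A B : Finset V)
    (hAB : Disjoint A B) (hABU : A ∪ B = Finset.univ) (S : Finset V) :
    incCount (Fone F A B) (S.image Sum.inl) = incCount F S + S.card := by
  have e1 : incCount (Fone F A B) (S.image Sum.inl) =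
      ((Fone F A B).edgeFinset.filter (fun e => ∃ v ∈ S.image Sum.inl, v ∈ e)).card := by
    unfold incCount; congr!
  have e2 : incCount F S = (F.edgeFinset.filter (fun e => ∃ v ∈ S, v ∈ e)).card := by
    unfold incCount; congr!
  rw [e1, e2, key_filter F A B hAB hABU S]
  have hdisj : Disjoint
      ((F.edgeFinset.filter (fun e => ∃ v ∈ S, v ∈ e)).image (Sym2.map Sum.inl))
      (S.image (fun v => s(Sum.inl v, Sum.inr (if v ∈ B then (0 : Fin 2) else 1)))) := by
    rw [Finset.disjoint_left]
    intro e he1 he2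
    rw [Finset.mem_image] at he1 he2
    obtain ⟨e', -, rfl⟩ := he1
    obtain ⟨x, -, heq⟩ := he2
    induction e' using Sym2.inductionOn with
    | hf p q =>
      rw [Sym2.map_pair_eq] at heq
      rcases Sym2.eq_iff.mp heq with ⟨h1, h2⟩ | ⟨h1, h2⟩ <;> simp at h1 h2
  rw [Finset.card_union_of_disjoint hdisj,
    Finset.card_image_of_injective _ (Sym2.map.injective Sum.inl_injective),
    Finset.card_image_of_injOn]
  intro v _ w _ h
  rcases Sym2.eq_iff.mp h with ⟨h1, _⟩ | ⟨h1, _⟩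
  · exact Sum.inl_injective h1
  · simp at h1

lemma rhoS_Fone [Fintype V] [DecidableEq V] (F : SimpleGraph V) (A B : Finset V)
    (hAB : Disjoint A B) (hABU : A ∪ B = Finset.univ) (S : Finset V) (hS : S.Nonempty) :
    rhoS (Fone F A B) (S.image Sum.inl) = rhoS F S + 1 := by
  have hc : (S.image Sum.inl).card = S.card :=
    Finset.card_image_of_injective _
      (Sum.inl_injective : Function.Injective (Sum.inl : V → V ⊕ Fin 2))
  have h0 : (S.card : ℝ) ≠ 0 := by
    exact Nat.cast_ne_zero.mpr (Finset.card_pos.mpr hS).ne'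
  rw [rhoS, rhoS, incCount_Fone F A B hAB hABU S, hc]
  push_cast
  field_simp

lemma compl_eq [Fintype V] [DecidableEq V] (R : Finset V) :
    (Finset.univ \ (R.image Sum.inl ∪ {Sum.inr 0, Sum.inr 1}) : Finset (V ⊕ Fin 2)) =
      (Finset.univ \ R).image Sum.inl := by
  ext x
  cases x with
  | inl v => simp
  | inr i => fin_cases i <;> simp

end Aux

/-- if `(F, R)` is balanced with `ρ(F) = b/a`, then `(F(1), R ∪ {x, y})`
is balanced with `ρ(F(1)) = (a+b)/a`. -/
theorem stmt_8 [Fintype V] [DecidableEq V] (F : SimpleGraph V) (A B R : Finset V)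
    (hR : R ⊂ Finset.univ)
    (hAB : Disjoint A B) (hABU : A ∪ B = Finset.univ)
    (hbip : ∀ u v, F.Adj u v → (u ∈ A ∧ v ∈ B) ∨ (u ∈ B ∧ v ∈ A))
    (a b : ℕ) (ha : 0 < a) (hb : 0 < b)
    (hρ : rhoS F (Finset.univ \ R) = (b : ℝ) / (a : ℝ))
    (hbal : IsBalanced F R) :
    IsBalanced (Fone F A B) (R.image Sum.inl ∪ {Sum.inr 0, Sum.inr 1}) ∧
    rhoS (Fone F A B) (Finset.univ \ (R.image Sum.inl ∪ {Sum.inr 0, Sum.inr 1}))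
      = ((a : ℝ) + (b : ℝ)) / (a : ℝ) := by
  classical
  have hcompl := compl_eq (V := V) R
  have hUne : (Finset.univ \ R : Finset V).Nonempty := by
    obtain ⟨x, -, hx⟩ := Finset.exists_of_ssubset hR
    exact ⟨x, Finset.mem_sdiff.mpr ⟨Finset.mem_univ x, hx⟩⟩
  have ha0 : (a : ℝ) ≠ 0 := by exact_mod_cast ha.ne'
  have hrho' : rhoS (Fone F A B)
      (Finset.univ \ (R.image Sum.inl ∪ {Sum.inr 0, Sum.inr 1}))
      = ((a : ℝ) + (b : ℝ)) / (a : ℝ) := by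
    rw [hcompl, rhoS_Fone F A B hAB hABU _ hUne, hρ]
    field_simp
    ring
  refine ⟨?_, hrho'⟩
  intro S hSne hSsub
  rw [hcompl] at hSsub
  set T := S.preimage Sum.inl (Sum.inl_injective.injOn) with hT
  have hST : S = T.image Sum.inl := by
    ext x
    constructor
    · intro hx
      obtain ⟨v, -, rfl⟩ := Finset.mem_image.mp (hSsub hx)
      exact Finset.mem_image.mpr ⟨v, Finset.mem_preimage.mpr hx, rfl⟩
    · rintro hx
      obtain ⟨v, hv, rfl⟩ := Finset.mem_image.mp hx
      exact Finset.mem_preimage.mp hv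
  have hTsub : T ⊆ Finset.univ \ R := by
    intro v hv
    rw [hT, Finset.mem_preimage] at hv
    obtain ⟨w, hw, hww⟩ := Finset.mem_image.mp (hSsub hv)
    rwa [← Sum.inl_injective hww]
  have hTne : T.Nonempty := by
    obtain ⟨x, hx⟩ := hSne
    obtain ⟨v, -, rfl⟩ := Finset.mem_image.mp (hSsub hx)
    exact ⟨v, Finset.mem_preimage.mpr hx⟩
  rw [hST, rhoS_Fone F A B hAB hABU T hTne, hcompl,
    rhoS_Fone F A B hAB hABU _ hUne]
  have := hbal T hTne hTsub
  linarith
end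

section
/- For every pair of natural numbers a, b with b ≥ max{a, (a-1)²} and a ≥ 1, b > a (so that r = 2 - a/b ∈ (1,2)), the rational number 2 - a/b can be written in one of the following forms: 2 - 1/t for an integer t ≥ 1; 2 - a/(pa+1) for integers a ≥ 2, p ≥ 1; 2 - a/(pa-1) for integers a ≥ 2, p ≥ 2; or 2 - (r+1)/((r+1)p + (r-t)) for integers r ≥ 3, t with r ≥ t+2 ≥ 3, and p ≥ t. -/
/-- every rational `2 - a/b` with `b ≥ max{a, (a-1)²}`, `a ≥ 1`, `b > a`
can be written in one of the four listed forms. -/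
theorem stmt_9 (a b : ℕ) (ha : 1 ≤ a) (hab : a < b) (hb : max a ((a - 1) ^ 2) ≤ b) :
    (∃ t : ℕ, 1 ≤ t ∧ 2 - (a : ℚ) / b = 2 - 1 / (t : ℚ)) ∨
    (∃ a' p : ℕ, 2 ≤ a' ∧ 1 ≤ p ∧
      2 - (a : ℚ) / b = 2 - (a' : ℚ) / ((p : ℚ) * a' + 1)) ∨
    (∃ a' p : ℕ, 2 ≤ a' ∧ 2 ≤ p ∧
      2 - (a : ℚ) / b = 2 - (a' : ℚ) / ((p : ℚ) * a' - 1)) ∨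
    (∃ r t p : ℕ, 3 ≤ r ∧ t + 2 ≤ r ∧ 3 ≤ t + 2 ∧ t ≤ p ∧
      2 - (a : ℚ) / b = 2 - ((r : ℚ) + 1) / (((r : ℚ) + 1) * p + ((r : ℚ) - (t : ℚ)))) := by
  rcases eq_or_lt_of_le ha with h1 | ha2
  · -- a = 1
    left
    refine ⟨b, by omega, ?_⟩
    rw [← h1]
    norm_num
  · have ha2 : 2 ≤ a := ha2
    have ha0 : (0:ℕ) < a := by omega
    have haq : (a:ℚ) ≠ 0 := by exact_mod_cast ha0.ne'
    set s := b % a with hs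
    set p := b / a with hp
    have hdiv : b = p * a + s := by rw [hp, hs, mul_comm]; exact (Nat.div_add_mod b a).symm
    have hslt : s < a := by rw [hs]; exact Nat.mod_lt _ ha0
    have hp1 : 1 ≤ p := by
      rcases Nat.eq_zero_or_pos p with h | h
      · rw [h] at hdiv; omega
      · exact h
    by_cases h0 : s = 0
    · -- first form
      left
      refine ⟨p, hp1, ?_⟩
      have hpq : (p:ℚ) ≠ 0 := by exact_mod_cast (by omega : p ≠ 0)
      have hbq : (b:ℚ) ≠ 0 := by exact_mod_cast (by omega : b ≠ 0)
      congr 1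
      rw [div_eq_div_iff hbq hpq]
      have : (b:ℚ) = p * a + s := by exact_mod_cast hdiv
      rw [this, h0]
      push_cast
      ring
    · by_cases h1 : s = 1
      · -- second form
        right; left
        refine ⟨a, p, ha2, hp1, ?_⟩
        congr 1
        have : (b:ℚ) = p * a + s := by exact_mod_cast hdiv
        rw [this, h1]
        push_cast
        ring
      · by_cases h2 : s = a - 1
        · -- third form: b = p*a + a - 1 = (p+1)*a - 1
          right; right; left
          refine ⟨a, p + 1, ha2, by omega, ?_⟩
          congr 1
          have hnat : b + 1 = p * a + a := by omega
          have hq : (b:ℚ) + 1 = p * a + a := by exact_mod_cast hnat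
          push_cast
          rw [show ((p:ℚ) + 1) * (a:ℚ) - 1 = (b:ℚ) from by linear_combination -hq]
        · -- fourth form
          right; right; right
          have hs2 : 2 ≤ s := by omega
          have hsa : s ≤ a - 2 := by omega
          have ha4 : 4 ≤ a := by omega
          refine ⟨a - 1, a - 1 - s, p, by omega, by omega, by omega, ?_, ?_⟩
          · -- t ≤ p using b ≥ (a-1)^2
            set t := a - 1 - s with ht
            have hb2 : (a - 1) ^ 2 ≤ b := le_trans (le_max_right _ _) hb
            have hats : a = t + s + 1 := by omega
            have hkey : t * a + s ≤ (a - 1) ^ 2 := by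
              have e : a - 1 = t + s := by omega
              rw [e, hats]
              nlinarith [hs2]
            have hta : t * a ≤ p * a := by linarith
            exact Nat.le_of_mul_le_mul_right hta ha0
          · -- the rational identity
            have h1q : ((a:ℚ) - 1) + 1 = a := by ring
            have hr : ((a - 1 : ℕ) : ℚ) = (a:ℚ) - 1 := by
              push_cast [Nat.cast_sub (by omega : 1 ≤ a)]; ring
            have htq : ((a - 1 - s : ℕ) : ℚ) = (a:ℚ) - 1 - s := by
              have : a - 1 - s + s + 1 = a := by omega
              have hc := congrArg (Nat.cast : ℕ → ℚ) this
              push_cast at hc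
              linarith
            rw [hr, htq]
            congr 1
            have : (b:ℚ) = p * a + s := by exact_mod_cast hdiv
            rw [this]
            ring
end

section
/- Let s ≥ 2, h ≥ 2 be integers, m = 2^{h+s+3}·s^s·h^{2s}, and let G be a K_{s,s}-free graph. For any collection of sets S_1, ..., S_k ⊆ V(G), each of size m and pairwise disjoint, with k ≤ h: if for each pair i < j one picks φ(i) ∈ S_i, φ(j) ∈ S_j uniformly and independently at random, then the probability that some pair φ(i)φ(j) is an edge of G is less than 1/2. -/
open Finset

/-!
Kővári–Sós–Turán double counting: an `s`-subset of `B` has fewer than `s` common neighbours in a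
disjoint set `A`, so `∑_{a ∈ A} C(deg_B a, s) ≤ (s - 1) C(|B|, s)`. Writing `m = 2sh² T`, at most
`(2sh²)^s` vertices of `A` have degree `≥ sT` into `B`, hence
`e(A, B) ≤ m · sT + (2sh²)^s m ≤ 3m² / (4h²)` for the given `m`. So a uniform choice from
`S_i × S_j` is an edge with probability at most `3 / (4h²)`, and the union bound over the
`C(k, 2) ≤ C(h, 2)` pairs gives at most `3(h - 1) / (8h) < 1 / 2`.
-/

theorem Nat.sq_le_two_pow_succ : ∀ n : ℕ, n ^ 2 ≤ 2 ^ (n + 1)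
  | 0 => by norm_num
  | n + 1 => by
    have ih := Nat.sq_le_two_pow_succ n
    have hn := n.lt_two_pow_self
    nlinarith [pow_succ 2 n, pow_succ 2 (n + 1)]

theorem Nat.pow_le_choose_mul (t s : ℕ) : t ^ s ≤ (s * t).choose s := by
  have key : t ^ s * s.descFactorial s ≤ (s * t).descFactorial s := by
    rw [Nat.descFactorial_eq_prod_range, Nat.descFactorial_eq_prod_range,
      pow_eq_prod_const, ← prod_mul_distrib]
    refine prod_le_prod' fun i hi => ?_
    have hi : i ≤ s := (mem_range.1 hi).le
    rcases t.eq_zero_or_pos with rfl | ht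
    · simp
    · have : i ≤ t * i := Nat.le_mul_of_pos_left i ht
      have : t * i ≤ t * s := Nat.mul_le_mul_left t hi
      rw [Nat.mul_sub, mul_comm s t]
      omega
  rw [Nat.descFactorial_self, Nat.descFactorial_eq_factorial_mul_choose, mul_comm] at key
  exact Nat.le_of_mul_le_mul_left key s.factorial_pos

namespace SimpleGraph

variable {V : Type*} (G : SimpleGraph V) [DecidableRel G.Adj] (A B : Finset V)

theorem card_interedges_eq_sum : #(G.interedges A B) = ∑ a ∈ A, #{b ∈ B | G.Adj a b} := by
  rw [interedges_def, card_filter, sum_product]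
  exact sum_congr rfl fun a _ => (card_filter _ _).symm

theorem card_interedges_le_add (D : ℕ) :
    #(G.interedges A B) ≤ #A * D + #{a ∈ A | D ≤ #{b ∈ B | G.Adj a b}} * #B := by
  have hdeg : ∀ a ∈ A, #{b ∈ B | G.Adj a b}
      ≤ D + if D ≤ #{b ∈ B | G.Adj a b} then #B else 0 := by
    intro a _
    split_ifs
    · exact (card_filter_le _ _).trans (Nat.le_add_left _ _)
    · omega
  calc #(G.interedges A B) ≤ ∑ a ∈ A, (D + if D ≤ #{b ∈ B | G.Adj a b} then #B else 0) := by
        rw [card_interedges_eq_sum]; exact sum_le_sum hdeg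
    _ = #A * D + #{a ∈ A | D ≤ #{b ∈ B | G.Adj a b}} * #B := by
        rw [sum_add_distrib, sum_const, smul_eq_mul, sum_ite, sum_const, sum_const_zero,
          smul_eq_mul, add_zero]

end SimpleGraph

namespace KssFree

variable {V : Type*} {G : SimpleGraph V} [DecidableRel G.Adj] {s : ℕ} {A B : Finset V}

theorem card_filter_forall_adj_lt (hG : KssFree s G) {P : Finset V} (hP : #P = s)
    (hAP : Disjoint A P) : #{a ∈ A | ∀ b ∈ P, G.Adj a b} < s := by
  by_contra! hs
  obtain ⟨A', hA'A, hA'⟩ := exists_subset_card_eq hs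
  refine hG ⟨A', P, hA', hP, disjoint_of_subset_left (hA'A.trans (filter_subset _ _)) hAP, ?_⟩
  exact fun a ha => (mem_filter.1 (hA'A ha)).2

theorem sum_choose_card_adj_le (hG : KssFree s G) (hAB : Disjoint A B) :
    ∑ a ∈ A, (#{b ∈ B | G.Adj a b}).choose s ≤ (s - 1) * (#B).choose s := by
  have hchoose : ∀ a, (#{b ∈ B | G.Adj a b}).choose s
      = #{P ∈ B.powersetCard s | ∀ b ∈ P, G.Adj a b} := by
    intro a
    rw [← card_powersetCard]
    congr 1
    ext P
    simp only [mem_powersetCard, mem_filter, subset_iff]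
    grind
  calc ∑ a ∈ A, (#{b ∈ B | G.Adj a b}).choose s
      = ∑ P ∈ B.powersetCard s, #{a ∈ A | ∀ b ∈ P, G.Adj a b} := by
        simp_rw [hchoose]
        exact sum_card_bipartiteAbove_eq_sum_card_bipartiteBelow (fun a P => ∀ b ∈ P, G.Adj a b)
    _ ≤ #(B.powersetCard s) • (s - 1) := by
        refine sum_le_card_nsmul _ _ _ fun P hP => Nat.le_sub_one_of_lt ?_
        obtain ⟨hPB, hP⟩ := mem_powersetCard.1 hP
        exact hG.card_filter_forall_adj_lt hP (disjoint_of_subset_right hPB hAB)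
    _ = (s - 1) * (#B).choose s := by rw [card_powersetCard, smul_eq_mul, mul_comm]

theorem card_filter_le_mul_pow_le (hG : KssFree s G) (hAB : Disjoint A B) (T : ℕ) :
    #{a ∈ A | s * T ≤ #{b ∈ B | G.Adj a b}} * T ^ s ≤ #B ^ s :=
  calc #{a ∈ A | s * T ≤ #{b ∈ B | G.Adj a b}} * T ^ s
      = ∑ a ∈ A with s * T ≤ #{b ∈ B | G.Adj a b}, T ^ s := by rw [sum_const, smul_eq_mul]
    _ ≤ ∑ a ∈ A with s * T ≤ #{b ∈ B | G.Adj a b}, (#{b ∈ B | G.Adj a b}).choose s :=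
        sum_le_sum fun a ha =>
          (Nat.pow_le_choose_mul T s).trans (Nat.choose_le_choose s (mem_filter.1 ha).2)
    _ ≤ ∑ a ∈ A, (#{b ∈ B | G.Adj a b}).choose s := sum_le_sum_of_subset (filter_subset _ _)
    _ ≤ (s - 1) * (#B).choose s := hG.sum_choose_card_adj_le hAB
    _ ≤ s.factorial * (#B).choose s :=
        Nat.mul_le_mul_right _ ((Nat.sub_le s 1).trans s.self_le_factorial)
    _ = (#B).descFactorial s := (Nat.descFactorial_eq_factorial_mul_choose _ _).symm
    _ ≤ #B ^ s := Nat.descFactorial_le_pow _ _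

theorem card_interedges_le (hG : KssFree s G) (hAB : Disjoint A B) {c T : ℕ} (hT : 0 < T)
    (hB : #B = c * T) : #(G.interedges A B) ≤ #A * (s * T) + c ^ s * #B := by
  have hhigh : #{a ∈ A | s * T ≤ #{b ∈ B | G.Adj a b}} ≤ c ^ s := by
    refine Nat.le_of_mul_le_mul_right ?_ (pow_pos hT s)
    rw [← mul_pow, ← hB]
    exact hG.card_filter_le_mul_pow_le hAB T
  exact (G.card_interedges_le_add A B (s * T)).trans (by gcongr)

theorem four_mul_sq_mul_card_interedges_le (hG : KssFree s G) (hs : 0 < s) {h m : ℕ}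
    (hh : 0 < h) (hm : m = 2 ^ (h + s + 3) * s ^ s * h ^ (2 * s)) (hAB : Disjoint A B)
    (hA : #A = m) (hB : #B = m) : 4 * h ^ 2 * #(G.interedges A B) ≤ 3 * m ^ 2 := by
  obtain ⟨s, rfl⟩ : ∃ s', s = s' + 1 := ⟨s - 1, by omega⟩
  set c := 2 * (s + 1) * h ^ 2
  set T := 2 ^ (h + s + 3) * (s + 1) ^ s * h ^ (2 * s)
  have hmT : m = c * T := by rw [hm]; ring
  have hlow : 4 * h ^ 2 * ((s + 1) * T) = 2 * m := by rw [hmT]; ring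
  have hhigh : 4 * h ^ 2 * c ^ (s + 1) ≤ m :=
    calc 4 * h ^ 2 * c ^ (s + 1)
        = h ^ 2 * (4 * 2 ^ (s + 1) * (s + 1) ^ (s + 1) * h ^ (2 * (s + 1))) := by
          simp only [c]; rw [mul_pow, mul_pow, ← pow_mul]; ring
      _ ≤ 2 ^ (h + 1) * (4 * 2 ^ (s + 1) * (s + 1) ^ (s + 1) * h ^ (2 * (s + 1))) :=
          Nat.mul_le_mul_right _ (Nat.sq_le_two_pow_succ h)
      _ = m := by rw [hm]; ring
  have he := hG.card_interedges_le hAB (by positivity) (hB.trans hmT)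
  rw [hA, hB] at he
  calc 4 * h ^ 2 * #(G.interedges A B) ≤ 4 * h ^ 2 * (m * ((s + 1) * T) + c ^ (s + 1) * m) := by
        gcongr
    _ = m * (4 * h ^ 2 * ((s + 1) * T)) + 4 * h ^ 2 * c ^ (s + 1) * m := by ring
    _ ≤ m * (2 * m) + m * m := by rw [hlow]; gcongr
    _ = 3 * m ^ 2 := by ring

end KssFree

section PiFinset

open Fintype

variable {ι : Type*} [Fintype ι] [DecidableEq ι]

lemma Fintype.card_filter_piFinset_eq_mul_card {α : ι → Type*} [∀ i, DecidableEq (α i)]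
    (S : ∀ i, Finset (α i)) {i : ι} {a : α i} (ha : a ∈ S i) :
    #{f ∈ piFinset S | f i = a} * #(S i) = #(piFinset S) := by
  rw [card_filter_piFinset_eq_of_mem _ _ ha, card_piFinset, mul_comm,
    mul_prod_erase univ (fun j => #(S j)) (mem_univ i)]

lemma Fintype.card_filter_piFinset_eq_and_eq_mul {α : ι → Type*} [∀ i, DecidableEq (α i)]
    (S : ∀ i, Finset (α i)) {i j : ι} (hij : i ≠ j) {a : α i} {b : α j}
    (ha : a ∈ S i) (hb : b ∈ S j) :
    #{f ∈ piFinset S | f i = a ∧ f j = b} * (#(S i) * #(S j)) = #(piFinset S) := by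
  have hfilter : {f ∈ piFinset S | f i = a ∧ f j = b}
      = {f ∈ piFinset (Function.update S i {a}) | f j = b} := by
    rw [piFinset_update_singleton_eq_filter_piFinset_eq _ _ ha, filter_filter]
  have hS : Function.update S i {a} j = S j := Function.update_of_ne hij.symm _ _
  have hb' : b ∈ Function.update S i {a} j := hS ▸ hb
  rw [hfilter, ← hS, mul_comm (#(S i)), ← mul_assoc, card_filter_piFinset_eq_mul_card _ hb',
    piFinset_update_singleton_eq_filter_piFinset_eq _ _ ha, card_filter_piFinset_eq_mul_card _ ha]

lemma Fintype.card_filter_piFinset_rel_mul {α : ι → Type*} [∀ i, DecidableEq (α i)]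
    (S : ∀ i, Finset (α i)) {i j : ι} (hij : i ≠ j) (R : α i → α j → Prop)
    [∀ a, DecidablePred (R a)] :
    #{f ∈ piFinset S | R (f i) (f j)} * (#(S i) * #(S j))
      = #(Rel.interedges R (S i) (S j)) * #(piFinset S) := by
  have hmaps : ∀ f ∈ {f ∈ piFinset S | R (f i) (f j)},
      (f i, f j) ∈ Rel.interedges R (S i) (S j) := by
    intro f hf
    rw [mem_filter, mem_piFinset] at hf
    exact Rel.mk_mem_interedges_iff.2 ⟨hf.1 i, hf.1 j, hf.2⟩
  rw [card_eq_sum_card_fiberwise hmaps, sum_mul]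
  refine sum_const_nat fun p hp => ?_
  obtain ⟨hp1, hp2, hR⟩ := Rel.mem_interedges_iff.1 hp
  rw [← card_filter_piFinset_eq_and_eq_mul S hij hp1 hp2, filter_filter]
  congr 3
  ext f
  rw [Prod.ext_iff]
  exact ⟨And.right, fun h => ⟨h.1 ▸ h.2 ▸ hR, h⟩⟩

lemma Fintype.card_filter_piFinset_exists_rel_le {α : Type*} [LinearOrder ι] [DecidableEq α]
    (S : ι → Finset α) {R : α → α → Prop} [DecidableRel R] [hR : Std.Symm R] {N : ℝ}
    (hN : ∀ i j, i < j → (#{f ∈ piFinset S | R (f i) (f j)} : ℝ) ≤ N) :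
    (#{f ∈ piFinset S | ∃ i j, i ≠ j ∧ R (f i) (f j)} : ℝ) ≤ (card ι).choose 2 * N := by
  have hunion : #{f ∈ piFinset S | ∃ i j, i ≠ j ∧ R (f i) (f j)}
      ≤ ∑ p : ι × ι with p.1 < p.2, #{f ∈ piFinset S | R (f p.1) (f p.2)} := by
    refine (card_le_card fun f hf => ?_).trans card_biUnion_le
    obtain ⟨hfS, i, j, hij, hfR⟩ := mem_filter.1 hf
    rw [mem_biUnion]
    rcases hij.lt_or_gt with hlt | hgt
    · exact ⟨(i, j), mem_filter.2 ⟨mem_univ _, hlt⟩, mem_filter.2 ⟨hfS, hfR⟩⟩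
    · exact ⟨(j, i), mem_filter.2 ⟨mem_univ _, hgt⟩, mem_filter.2 ⟨hfS, symm_of R hfR⟩⟩
  calc (#{f ∈ piFinset S | ∃ i j, i ≠ j ∧ R (f i) (f j)} : ℝ)
      ≤ ∑ p : ι × ι with p.1 < p.2, (#{f ∈ piFinset S | R (f p.1) (f p.2)} : ℝ) := by
        exact_mod_cast hunion
    _ ≤ #{p : ι × ι | p.1 < p.2} • N :=
        sum_le_card_nsmul _ _ _ fun p hp => hN _ _ (mem_filter.1 hp).2
    _ = _ := by rw [nsmul_eq_mul, card_product_filter_lt]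

theorem KssFree.card_filter_piFinset_adj_le {V : Type*} [DecidableEq V] {G : SimpleGraph V}
    [DecidableRel G.Adj] {s h m : ℕ} (hG : KssFree s G) (hs : 0 < s) (hh : 0 < h)
    (hm : m = 2 ^ (h + s + 3) * s ^ s * h ^ (2 * s)) (S : ι → Finset V)
    (hcard : ∀ i, #(S i) = m) {i j : ι} (hij : i ≠ j) (hdisj : Disjoint (S i) (S j)) :
    (#{f ∈ piFinset S | G.Adj (f i) (f j)} : ℝ) ≤ 3 * m ^ card ι / (4 * h ^ 2) := by
  have hm0 : 0 < m := by rw [hm]; positivity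
  have hcount := card_filter_piFinset_rel_mul S hij G.Adj
  simp only [hcard, card_piFinset, prod_const, card_univ] at hcount
  have hcountR : (#{f ∈ piFinset S | G.Adj (f i) (f j)} : ℝ) * (m * m)
      = #(G.interedges (S i) (S j)) * m ^ card ι := by exact_mod_cast hcount
  have hedge := hG.four_mul_sq_mul_card_interedges_le hs hh hm hdisj (hcard i) (hcard j)
  rw [le_div_iff₀ (by positivity)]
  refine le_of_mul_le_mul_right ?_ (by positivity : (0 : ℝ) < m * m)
  calc (#{f ∈ piFinset S | G.Adj (f i) (f j)} : ℝ) * (4 * h ^ 2) * (m * m)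
      = 4 * (h : ℝ) ^ 2 * #(G.interedges (S i) (S j)) * (m : ℝ) ^ card ι := by
        linear_combination (4 * (h : ℝ) ^ 2) * hcountR
    _ ≤ 3 * (m : ℝ) ^ 2 * (m : ℝ) ^ card ι := by
        gcongr ?_ * _; exact_mod_cast hedge
    _ = 3 * (m : ℝ) ^ card ι * (m * m) := by ring

end PiFinset

/-- for random independent uniform choices `φ i ∈ S i` from pairwise disjoint
`m`-sets in a `K_{s,s}`-free graph, the probability that some pair `φ i φ j` is an edge is
less than `1/2`; equivalently, fewer than `m^k / 2` of the `m^k` choice functions contain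
an edge. -/
theorem stmt_13 {V : Type*} [Fintype V] [DecidableEq V]
    (G : SimpleGraph V) [DecidableRel G.Adj]
    (s h k : ℕ) (hs : 2 ≤ s) (hh : 2 ≤ h) (hk : k ≤ h)
    (m : ℕ) (hm : m = 2 ^ (h + s + 3) * s ^ s * h ^ (2 * s))
    (hG : KssFree s G)
    (S : Fin k → Finset V) (hcard : ∀ i, (S i).card = m)
    (hdisj : ∀ i j, i ≠ j → Disjoint (S i) (S j)) :
    ((Finset.univ.filter (fun φ : Fin k → V =>
        (∀ i, φ i ∈ S i) ∧ ∃ i j, i ≠ j ∧ G.Adj (φ i) (φ j))).card : ℝ)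
      < (1 / 2) * (m : ℝ) ^ k := by
  have hs0 : 0 < s := by omega
  have hh0 : 0 < h := by omega
  have hm0 : 0 < m := by rw [hm]; positivity
  have hpair (i j : Fin k) (hij : i < j) :=
    hG.card_filter_piFinset_adj_le hs0 hh0 hm S hcard hij.ne (hdisj i j hij.ne)
  calc _ ≤ (k.choose 2 : ℝ) * (3 * m ^ k / (4 * h ^ 2)) := by
        convert Fintype.card_filter_piFinset_exists_rel_le S (hR := G.symm) hpair using 3
        <;> simp [Finset.ext_iff, Fintype.mem_piFinset]
    _ ≤ (h.choose 2 : ℝ) * (3 * m ^ k / (4 * h ^ 2)) := by gcongr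
    _ = 3 * (h - 1) / (8 * h) * m ^ k := by rw [Nat.cast_choose_two]; field_simp; ring
    _ < 1 / 2 * m ^ k := by
        refine mul_lt_mul_of_pos_right ?_ (by positivity)
        rw [div_lt_div_iff₀ (by positivity) (by norm_num)]
        linarith
end

section
/- Let s ≥ 2 and let G be a K_{s,s}-free graph. Let q ≥ 1, h ≥ q, t = 2s(4h)^s, and suppose U_1, ..., U_q are pairwise disjoint t-sets of vertices of G. Then there exist vertices w_1 ∈ U_1, ..., w_q ∈ U_q such that {w_1, ..., w_q} is an independent set in G. -/
open Finset

section Aux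

variable {V : Type*} [Fintype V] [DecidableEq V]

/-- Key lemma: in a `K_{s,s}`-free graph, if `|W| ≥ s(4h)^s`, then the set of vertices
outside `W` having at least `|W|/(2h)` neighbours in `W` has size less than `4sh`. -/
lemma bad_small (G : SimpleGraph V) [DecidableRel G.Adj] (s h : ℕ) (hs : 2 ≤ s) (hh : 1 ≤ h)
    (hG : KssFree s G) (W : Finset V) (hW : s * (4 * h) ^ s ≤ W.card) :
    ((univ \ W).filter
      (fun x => W.card ≤ 2 * h * ((W.filter (fun w => G.Adj x w)).card))).card < 4 * s * h := by
  set Bad : Finset V :=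
    (univ \ W).filter
      (fun x => W.card ≤ 2 * h * ((W.filter (fun w => G.Adj x w)).card)) with hBadDef
  by_contra hc
  push_neg at hc
  obtain ⟨X, hXBad, hXcard⟩ := Finset.exists_subset_card_eq hc
  set n := W.card with hn
  set m := 4 * s * h with hm
  have hnpos : 0 < n := by
    have h4h : 0 < (4 * h) ^ s := by positivity
    have : 0 < s * (4 * h) ^ s := by positivity
    omega
  -- degree of w ∈ W into X
  set d : V → ℕ := fun w => (X.filter (fun x => G.Adj w x)).card with hd
  -- Step A : double counting edges between X and W
  have hsumd : 2 * s * n ≤ ∑ w ∈ W, d w := by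
    have hswap : ∑ w ∈ W, d w = ∑ x ∈ X, (W.filter (fun w => G.Adj x w)).card := by
      simp only [hd, Finset.card_filter]
      rw [Finset.sum_comm]
      refine Finset.sum_congr rfl fun x _ => Finset.sum_congr rfl fun w _ => ?_
      simp [G.adj_comm]
    have hlow : ∀ x ∈ X, n ≤ 2 * h * (W.filter (fun w => G.Adj x w)).card := by
      intro x hx
      have := hXBad hx
      rw [hBadDef, Finset.mem_filter] at this
      exact this.2
    have := Finset.card_nsmul_le_sum X (fun x => 2 * h * (W.filter (fun w => G.Adj x w)).card)
      n hlow
    rw [← Finset.mul_sum, hXcard] at this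
    simp only [smul_eq_mul] at this
    rw [hswap]
    have h2h : (2 * h) * (2 * s * n) ≤ (2 * h) * ∑ x ∈ X, (W.filter (fun w => G.Adj x w)).card := by
      calc (2 * h) * (2 * s * n) = m * n := by ring
        _ ≤ 2 * h * ∑ x ∈ X, (W.filter (fun w => G.Adj x w)).card := this
    exact Nat.le_of_mul_le_mul_left h2h (by omega)
  -- Step B : the shifted degrees have large sum
  have hsumx : (s + 1) * n ≤ ∑ w ∈ W, (d w + 1 - s) := by
    have hpt : ∀ w ∈ W, d w + 1 ≤ (d w + 1 - s) + s := fun w _ => le_tsub_add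
    have hsum1 : ∑ w ∈ W, (d w + 1) ≤ ∑ w ∈ W, ((d w + 1 - s) + s) :=
      Finset.sum_le_sum hpt
    rw [Finset.sum_add_distrib, Finset.sum_const, Finset.sum_add_distrib, Finset.sum_const] at hsum1
    simp only [smul_eq_mul, mul_one, ← hn] at hsum1
    -- hsum1 : (∑ d w) + n ≤ (∑ (d w + 1 - s)) + n * s
    have h2 : 2 * s * n + n ≤ (∑ w ∈ W, (d w + 1 - s)) + n * s := le_trans (by omega) hsum1
    have hns : n * s = s * n := by ring
    rw [hns] at h2
    have : (s + 1) * n + s * n ≤ (∑ w ∈ W, (d w + 1 - s)) + s * n := by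
      calc (s + 1) * n + s * n = 2 * s * n + n := by ring
        _ ≤ _ := h2
    omega
  -- Step C : bound on the sum of s-th powers of shifted degrees
  have hsumpow : ∑ w ∈ W, (d w + 1 - s) ^ s ≤ (s - 1) * m ^ s := by
    have hC1 : ∀ w ∈ W, (d w + 1 - s) ^ s ≤ Nat.factorial s * (d w).choose s := by
      intro w _
      calc (d w + 1 - s) ^ s ≤ (d w).descFactorial s := Nat.pow_sub_le_descFactorial (d w) s
        _ = Nat.factorial s * (d w).choose s := Nat.descFactorial_eq_factorial_mul_choose _ _
    have hC2 : ∑ w ∈ W, (d w).choose s ≤ (s - 1) * m.choose s := by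
      -- rewrite each choose as a count of s-subsets
      have hchoose : ∀ w, (d w).choose s =
          ((X.powersetCard s).filter (fun A => A ⊆ X.filter (fun x => G.Adj w x))).card := by
        intro w
        have hset : (X.filter (fun x => G.Adj w x)).powersetCard s =
            (X.powersetCard s).filter (fun A => A ⊆ X.filter (fun x => G.Adj w x)) := by
          ext A
          simp only [Finset.mem_powersetCard, Finset.mem_filter]
          constructor
          · rintro ⟨hsub, hcard⟩
            exact ⟨⟨hsub.trans (Finset.filter_subset _ _), hcard⟩, hsub⟩
          · rintro ⟨⟨_, hcard⟩, hsub⟩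
            exact ⟨hsub, hcard⟩
        rw [← Finset.card_powersetCard, hset]
      have hswap : ∑ w ∈ W, (d w).choose s =
          ∑ A ∈ X.powersetCard s, (W.filter (fun w => A ⊆ X.filter (fun x => G.Adj w x))).card := by
        simp only [hchoose, Finset.card_filter]
        exact Finset.sum_comm
      rw [hswap]
      have hA : ∀ A ∈ X.powersetCard s,
          (W.filter (fun w => A ⊆ X.filter (fun x => G.Adj w x))).card ≤ s - 1 := by
        intro A hA
        rw [Finset.mem_powersetCard] at hA
        by_contra hgt
        push_neg at hgt
        have hsle : s ≤ (W.filter (fun w => A ⊆ X.filter (fun x => G.Adj w x))).card := by omega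
        obtain ⟨B, hBsub, hBcard⟩ := Finset.exists_subset_card_eq hsle
        apply hG
        refine ⟨A, B, hA.2, hBcard, ?_, ?_⟩
        · -- A is outside W, B inside W
          rw [Finset.disjoint_left]
          intro a haA haB
          have haBad : a ∈ Bad := hXBad (hA.1 haA)
          rw [hBadDef, Finset.mem_filter, Finset.mem_sdiff] at haBad
          exact haBad.1.2 ((Finset.filter_subset _ _) (hBsub haB))
        · intro a haA b hbB
          have hb := hBsub hbB
          rw [Finset.mem_filter] at hb
          have := hb.2 haA
          rw [Finset.mem_filter] at this
          exact this.2.symm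
      calc ∑ A ∈ X.powersetCard s,
            (W.filter (fun w => A ⊆ X.filter (fun x => G.Adj w x))).card
          ≤ ∑ _A ∈ X.powersetCard s, (s - 1) := Finset.sum_le_sum hA
        _ = (X.powersetCard s).card * (s - 1) := by rw [Finset.sum_const, smul_eq_mul]
        _ = (s - 1) * m.choose s := by rw [Finset.card_powersetCard, hXcard, mul_comm]
    calc ∑ w ∈ W, (d w + 1 - s) ^ s ≤ ∑ w ∈ W, Nat.factorial s * (d w).choose s :=
          Finset.sum_le_sum hC1
      _ = Nat.factorial s * ∑ w ∈ W, (d w).choose s := by rw [Finset.mul_sum]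
      _ ≤ Nat.factorial s * ((s - 1) * m.choose s) := Nat.mul_le_mul_left _ hC2
      _ = (s - 1) * (Nat.factorial s * m.choose s) := by ring
      _ = (s - 1) * m.descFactorial s := by rw [Nat.descFactorial_eq_factorial_mul_choose]
      _ ≤ (s - 1) * m ^ s := Nat.mul_le_mul_left _ (Nat.descFactorial_le_pow _ _)
  -- Step D : power mean inequality (in ℚ)
  have hD : ((s + 1) * n) ^ s ≤ n ^ (s - 1) * ((s - 1) * m ^ s) := by
    have hs1 : s - 1 + 1 = s := by omega
    have hQ : ((∑ w ∈ W, ((d w + 1 - s : ℕ) : ℚ)) ^ (s - 1 + 1)) ≤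
        ((W.card : ℚ)) ^ (s - 1) * ∑ w ∈ W, ((d w + 1 - s : ℕ) : ℚ) ^ (s - 1 + 1) := by
      exact pow_sum_le_card_mul_sum_pow (fun i _ => by positivity) (s - 1)
    rw [hs1] at hQ
    rw [← Nat.cast_le (α := ℚ)]
    calc ((((s + 1) * n) ^ s : ℕ) : ℚ)
        = (((s + 1) * n : ℕ) : ℚ) ^ s := by rw [Nat.cast_pow]
      _ ≤ (∑ w ∈ W, ((d w + 1 - s : ℕ) : ℚ)) ^ s := by
          apply pow_le_pow_left₀ (by positivity)
          rw [← Nat.cast_sum]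
          exact Nat.cast_le.mpr hsumx
      _ ≤ ((W.card : ℚ)) ^ (s - 1) * ∑ w ∈ W, ((d w + 1 - s : ℕ) : ℚ) ^ s := hQ
      _ = ((n ^ (s - 1) : ℕ) : ℚ) * ((∑ w ∈ W, (d w + 1 - s) ^ s : ℕ) : ℚ) := by
          rw [Nat.cast_sum, Nat.cast_pow, hn]
          congr 1
          exact Finset.sum_congr rfl fun w _ => by rw [Nat.cast_pow]
      _ ≤ ((n ^ (s - 1) : ℕ) : ℚ) * (((s - 1) * m ^ s : ℕ) : ℚ) := by
          apply mul_le_mul_of_nonneg_left (Nat.cast_le.mpr hsumpow) (by positivity)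
      _ = ((n ^ (s - 1) * ((s - 1) * m ^ s) : ℕ) : ℚ) := by norm_cast
  -- Step E : derive the numeric contradiction
  -- cancel n^(s-1)
  have hcancel : (s + 1) ^ s * n ≤ (s - 1) * m ^ s := by
    have hnpow : n ^ s = n ^ (s - 1) * n := by
      conv_lhs => rw [show s = s - 1 + 1 by omega, pow_succ]
    have hpow : ((s + 1) * n) ^ s = n ^ (s - 1) * ((s + 1) ^ s * n) := by
      rw [mul_pow, hnpow]
      ring
    rw [hpow] at hD
    exact Nat.le_of_mul_le_mul_left hD (by positivity)
  -- use n ≥ s * (4h)^s and m = 4sh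
  have hmpow : m ^ s = s ^ s * (4 * h) ^ s := by
    rw [hm]
    rw [← mul_pow]
    ring_nf
  have hfinal : ((s + 1) ^ s * s) * (4 * h) ^ s ≤ ((s - 1) * s ^ s) * (4 * h) ^ s := by
    calc ((s + 1) ^ s * s) * (4 * h) ^ s = (s + 1) ^ s * (s * (4 * h) ^ s) := by ring
      _ ≤ (s + 1) ^ s * n := Nat.mul_le_mul_left _ hW
      _ ≤ (s - 1) * m ^ s := hcancel
      _ = ((s - 1) * s ^ s) * (4 * h) ^ s := by rw [hmpow]; ring
  have h4hpos : 0 < (4 * h) ^ s := by positivity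
  have hle : (s + 1) ^ s * s ≤ (s - 1) * s ^ s :=
    Nat.le_of_mul_le_mul_right hfinal h4hpos
  -- but (s-1) * s^s < s * s^s ≤ s * (s+1)^s
  have hlt : (s - 1) * s ^ s < (s + 1) ^ s * s := by
    calc (s - 1) * s ^ s < s * s ^ s := by
          apply Nat.mul_lt_mul_of_lt_of_le (by omega) (le_refl _) (by positivity)
      _ ≤ s * (s + 1) ^ s := Nat.mul_le_mul_left _ (Nat.pow_le_pow_left (by omega) _)
      _ = (s + 1) ^ s * s := by ring
  omega

end Aux

/-- independent transversal of disjoint `t`-sets in a `K_{s,s}`-free graph,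
where `t = 2s(4h)^s`. -/
theorem stmt_14 {V : Type*} [Fintype V] [DecidableEq V]
    (G : SimpleGraph V) (s q h t : ℕ) (hs : 2 ≤ s) (hq : 1 ≤ q) (hh : q ≤ h)
    (ht : t = 2 * s * (4 * h) ^ s) (hG : KssFree s G)
    (U : Fin q → Finset V) (hcard : ∀ i, (U i).card = t)
    (hdisj : ∀ i j, i ≠ j → Disjoint (U i) (U j)) :
    ∃ w : Fin q → V, (∀ i, w i ∈ U i) ∧
      ∀ i j, i ≠ j → ¬ G.Adj (w i) (w j) := by
  classical
  have hh1 : 1 ≤ h := le_trans hq hh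
  have htpos : 0 < t := by
    rw [ht]
    have : 0 < 4 * h := by omega
    positivity
  -- the bad set of a working set W
  set Bad : Finset V → Finset V := fun W =>
    (univ \ W).filter (fun x => W.card ≤ 2 * h * ((W.filter (fun w => G.Adj x w)).card))
    with hBadDef
  have hBad : ∀ W : Finset V, s * (4 * h) ^ s ≤ W.card → (Bad W).card < 4 * s * h :=
    fun W hW => bad_small G s h hs hh1 hG W hW
  -- a default vertex
  have hV : Nonempty V := by
    have : (U ⟨0, hq⟩).Nonempty := by
      rw [← Finset.card_pos, hcard]; exact htpos
    exact ⟨this.choose⟩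
  obtain ⟨v0⟩ := hV
  -- Main induction
  have main : ∀ i : ℕ, i ≤ q → ∃ (w : Fin q → V) (U' : Fin q → Finset V),
      (∀ j, U' j ⊆ U j) ∧
      (∀ j : Fin q, (j : ℕ) < i → w j ∈ U j) ∧
      (∀ j k : Fin q, (j : ℕ) < i → (k : ℕ) < i → j ≠ k → ¬ G.Adj (w j) (w k)) ∧
      (∀ j : Fin q, i ≤ (j : ℕ) → 2 * h * t ≤ 2 * h * (U' j).card + i * t) ∧
      (∀ j : Fin q, i ≤ (j : ℕ) → ∀ k : Fin q, (k : ℕ) < i →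
        ∀ x ∈ U' j, ¬ G.Adj (w k) x) := by
    intro i
    induction i with
    | zero =>
      intro _
      refine ⟨fun _ => v0, U, fun j => subset_rfl, by omega, by omega, ?_, by omega⟩
      intro j _
      rw [hcard j]
      omega
    | succ i ih =>
      intro hi1
      have hiq : i < q := hi1
      obtain ⟨w, U', hsub, hmem, hind, hcard', hnadj⟩ := ih (Nat.le_of_lt hiq)
      set ι : Fin q := ⟨i, hiq⟩ with hι
      -- all current sets are still big
      have hbig : ∀ j : Fin q, i ≤ (j : ℕ) → s * (4 * h) ^ s ≤ (U' j).card := by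
        intro j hj
        have H := hcard' j hj
        -- 2ht ≤ 2h·c + i·t  with  i ≤ h - 1  and t = 2·(s·(4h)^s)
        have hih : i ≤ h - 1 := by omega
        have h1 : (2 * h) * (s * (4 * h) ^ s) ≤ (2 * h) * (U' j).card := by
          have ht2 : t = 2 * (s * (4 * h) ^ s) := by rw [ht]; ring
          -- 2h·c ≥ 2h·t - i·t ≥ (h+1)·t ≥ 2h·(s(4h)^s)
          have hit : i * t ≤ (h - 1) * t := Nat.mul_le_mul_right _ hih
          have hht : (h + 1) * t + (h - 1) * t = 2 * h * t := by
            have : h + 1 + (h - 1) = 2 * h := by omega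
            calc (h + 1) * t + (h - 1) * t = (h + 1 + (h - 1)) * t := by ring
              _ = 2 * h * t := by rw [this]
          have h2 : (h + 1) * t ≤ 2 * h * (U' j).card := by omega
          calc (2 * h) * (s * (4 * h) ^ s) = h * (2 * (s * (4 * h) ^ s)) := by ring
            _ = h * t := by rw [← ht2]
            _ ≤ (h + 1) * t := Nat.mul_le_mul_right _ (by omega)
            _ ≤ 2 * h * (U' j).card := h2
        exact Nat.le_of_mul_le_mul_left h1 (by omega)
      -- the union of all bad sets of later sets
      set Bun : Finset V := (univ : Finset (Fin q)).biUnion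
        (fun j => if i < (j : ℕ) then Bad (U' j) else ∅) with hBun
      have hBunCard : Bun.card < s * (4 * h) ^ s := by
        have hb : ∀ j ∈ (univ : Finset (Fin q)),
            (if i < (j : ℕ) then Bad (U' j) else ∅).card ≤ 4 * s * h - 1 := by
          intro j _
          by_cases hj : i < (j : ℕ)
          · simp only [if_pos hj]
            have := hBad (U' j) (hbig j (Nat.le_of_lt hj))
            omega
          · simp [if_neg hj]
        have h1 : Bun.card ≤ q * (4 * s * h - 1) := by
          have := Finset.card_biUnion_le_card_mul (univ : Finset (Fin q))
            (fun j => if i < (j : ℕ) then Bad (U' j) else ∅) (4 * s * h - 1) hb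
          rwa [Finset.card_univ, Fintype.card_fin] at this
        have h2 : q * (4 * s * h - 1) < s * (4 * h) ^ s := by
          have hsh : 1 ≤ 4 * s * h := by
            have : 0 < 4 * s * h := by positivity
            omega
          have h3 : q * (4 * s * h - 1) < q * (4 * s * h) + 1 := by
            have := Nat.mul_le_mul_left q (Nat.sub_le (4 * s * h) 1)
            omega
          have h4 : q * (4 * s * h) ≤ h * (4 * s * h) := Nat.mul_le_mul_right _ hh
          have h5 : h * (4 * s * h) < s * (4 * h) ^ 2 := by
            have : s * (4 * h) ^ 2 = 16 * s * h * h := by ring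
            rw [this]
            nlinarith [hh1, hs]
          have h6 : s * (4 * h) ^ 2 ≤ s * (4 * h) ^ s :=
            Nat.mul_le_mul_left _ (Nat.pow_le_pow_right (by omega) hs)
          omega
        omega
      -- pick the new vertex
      have hSdiff : (U' ι \ Bun).Nonempty := by
        rw [← Finset.card_pos]
        have h1 := Finset.le_card_sdiff Bun (U' ι)
        have h2 := hbig ι (le_refl i)
        omega
      obtain ⟨v, hv⟩ := hSdiff
      rw [Finset.mem_sdiff] at hv
      obtain ⟨hvS, hvB⟩ := hv
      -- new transversal and new working sets
      refine ⟨Function.update w ι v,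
        fun j => if i < (j : ℕ) then (U' j).filter (fun x => ¬ G.Adj v x) else U' j,
        ?_, ?_, ?_, ?_, ?_⟩
      · intro j
        by_cases hj : i < (j : ℕ)
        · simp only [if_pos hj]
          exact (Finset.filter_subset _ _).trans (hsub j)
        · simp only [if_neg hj]; exact hsub j
      · intro j hji
        by_cases hj : j = ι
        · subst hj
          rw [Function.update_self]
          exact hsub ι hvS
        · rw [Function.update_of_ne hj]
          apply hmem
          have : (j : ℕ) ≠ i := fun hc => hj (Fin.ext hc)
          omega
      · intro j k hji hki hjk
        by_cases hj : j = ι <;> by_cases hk : k = ι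
        · exact absurd (hj.trans hk.symm) hjk
        · -- j = ι, k < i
          subst hj
          have hki' : (k : ℕ) < i := by
            have : (k : ℕ) ≠ i := fun hc => hk (Fin.ext hc)
            omega
          rw [Function.update_self, Function.update_of_ne hk]
          intro hadj
          exact hnadj ι (le_refl i) k hki' v hvS hadj.symm
        · subst hk
          have hji' : (j : ℕ) < i := by
            have : (j : ℕ) ≠ i := fun hc => hj (Fin.ext hc)
            omega
          rw [Function.update_self, Function.update_of_ne hj]
          exact hnadj ι (le_refl i) j hji' v hvS
        · have hji' : (j : ℕ) < i := by
            have : (j : ℕ) ≠ i := fun hc => hj (Fin.ext hc)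
            omega
          have hki' : (k : ℕ) < i := by
            have : (k : ℕ) ≠ i := fun hc => hk (Fin.ext hc)
            omega
          rw [Function.update_of_ne hj, Function.update_of_ne hk]
          exact hind j k hji' hki' hjk
      · -- cardinality invariant
        intro j hj1
        have hj : i < (j : ℕ) := hj1
        simp only [if_pos hj]
        -- v is not bad for U' j
        have hvnotbad : v ∉ Bad (U' j) := by
          intro hc
          apply hvB
          rw [hBun, Finset.mem_biUnion]
          exact ⟨j, Finset.mem_univ j, by rw [if_pos hj]; exact hc⟩
        have hιj : ι ≠ j := by
          intro hc
          have : (j : ℕ) = i := by rw [← hc]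
          omega
        have hvnotin : v ∈ univ \ U' j := by
          rw [Finset.mem_sdiff]
          refine ⟨Finset.mem_univ v, fun hc => ?_⟩
          exact (Finset.disjoint_left.mp (hdisj ι j hιj)) (hsub ι hvS) (hsub j hc)
        have hdeg : 2 * h * ((U' j).filter (fun x => G.Adj v x)).card < (U' j).card := by
          by_contra hc
          push_neg at hc
          apply hvnotbad
          rw [hBadDef, Finset.mem_filter]
          exact ⟨hvnotin, hc⟩
        have hfc : ((U' j).filter (fun x => ¬ G.Adj v x)).card
            = (U' j).card - ((U' j).filter (fun x => G.Adj v x)).card := by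
          rw [Finset.filter_not, Finset.card_sdiff_of_subset (Finset.filter_subset _ _)]
        rw [hfc]
        have H := hcard' j (Nat.le_of_lt hj)
        have hct : (U' j).card ≤ t := by rw [← hcard j]; exact Finset.card_le_card (hsub j)
        have hdle : ((U' j).filter (fun x => G.Adj v x)).card ≤ (U' j).card :=
          Finset.card_filter_le _ _
        -- linear arithmetic over the monomials
        zify [hdle]
        zify at H
        have hdeg' : (2 * h * ((U' j).filter (fun x => G.Adj v x)).card : ℤ)
            < ((U' j).card : ℤ) := by exact_mod_cast hdeg
        have hct' : ((U' j).card : ℤ) ≤ (t : ℤ) := by exact_mod_cast hct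
        push_cast
        push_cast at H
        nlinarith [H, hdeg', hct']
      · -- non-adjacency invariant
        intro j hj1 k hki x hx
        have hj : i < (j : ℕ) := hj1
        simp only [if_pos hj, Finset.mem_filter] at hx
        by_cases hk : k = ι
        · subst hk
          rw [Function.update_self]
          exact hx.2
        · have hki' : (k : ℕ) < i := by
            have : (k : ℕ) ≠ i := fun hc => hk (Fin.ext hc)
            omega
          rw [Function.update_of_ne hk]
          exact hnadj j (Nat.le_of_lt hj) k hki' x hx.1
  obtain ⟨w, U', _, hmem, hind, _, _⟩ := main q (le_refl q)
  exact ⟨w, fun i => hmem i i.isLt, fun i j hij => hind i j i.isLt j.isLt hij⟩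
end

section
/- For positive integers a ≥ 2 and p ≥ 1, the rational 2 - a/(pa+1) lies strictly between 1 and 2, and the map (a,p) ↦ 2 - a/(pa+1) together with the maps (a,p) ↦ 2 - a/(pa-1) (p ≥ 2) and t ↦ 2 - 1/t and the family 2 - (r+1)/d for r ≥ 3, d ≥ r², d not ≡ ±1, 0 mod (r+1), jointly cover all rationals of the form 2 - a/b with gcd-free representation a ≥ 1, b ≥ max{a+1, (a-1)²}. -/
/-- the families `2 - 1/t`, `2 - a/(pa+1)`, `2 - a/(pa-1)` and
`2 - (r+1)/d` (with `r ≥ 3`, `d ≥ r²`, `d % (r+1) ∉ {0, 1, r}`) jointly cover all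
rationals `2 - a/b` with `b > a ≥ 1` and `b ≥ (a-1)²`; moreover `2 - a/(pa+1)` lies
strictly between `1` and `2`. -/
theorem stmt_16 (a b : ℕ) (ha : 1 ≤ a) (hab : a < b) (hb2 : (a - 1) ^ 2 ≤ b) :
    (∀ a' p : ℕ, 2 ≤ a' → 1 ≤ p →
      1 < 2 - (a' : ℚ) / ((p : ℚ) * a' + 1) ∧ 2 - (a' : ℚ) / ((p : ℚ) * a' + 1) < 2) ∧
    ((∃ t : ℕ, 1 ≤ t ∧ 2 - (a : ℚ) / b = 2 - 1 / (t : ℚ)) ∨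
     (∃ a' p : ℕ, 2 ≤ a' ∧ 1 ≤ p ∧
        2 - (a : ℚ) / b = 2 - (a' : ℚ) / ((p : ℚ) * a' + 1)) ∨
     (∃ a' p : ℕ, 2 ≤ a' ∧ 2 ≤ p ∧
        2 - (a : ℚ) / b = 2 - (a' : ℚ) / ((p : ℚ) * a' - 1)) ∨
     (∃ r d : ℕ, 3 ≤ r ∧ r ^ 2 ≤ d ∧ d % (r + 1) ≠ 0 ∧ d % (r + 1) ≠ 1 ∧
        d % (r + 1) ≠ r ∧ 2 - (a : ℚ) / b = 2 - ((r : ℚ) + 1) / (d : ℚ))) := by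
  constructor
  · intro a' p ha' hp
    have h1 : (1:ℚ) ≤ (p:ℚ) := by exact_mod_cast hp
    have h2 : (2:ℚ) ≤ (a':ℚ) := by exact_mod_cast ha'
    have hpos : (0:ℚ) < (p:ℚ) * a' + 1 := by nlinarith
    have hlt : (a':ℚ) / ((p:ℚ)*a'+1) < 1 := by
      rw [div_lt_one hpos]; nlinarith
    have hgt : 0 < (a':ℚ) / ((p:ℚ)*a'+1) := div_pos (by linarith) hpos
    constructor <;> linarith
  · rcases eq_or_lt_of_le ha with h1 | ha2
    · left
      exact ⟨b, by omega, by rw [← h1]; norm_num⟩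
    · have ha2' : 2 ≤ a := ha2
      have hd : a * (b / a) + b % a = b := Nat.div_add_mod b a
      have hdge : 1 ≤ b / a := Nat.one_le_div_iff (by omega) |>.mpr (by omega)
      have haQ : (0:ℚ) < (a:ℚ) := by exact_mod_cast (by omega : 0 < a)
      by_cases h0 : b % a = 0
      · left
        refine ⟨b / a, hdge, ?_⟩
        have ht : b = a * (b / a) := by omega
        have hc : (b:ℚ) = (a:ℚ) * ((b/a : ℕ):ℚ) := by exact_mod_cast ht
        have htQ : (0:ℚ) < ((b/a : ℕ):ℚ) := by exact_mod_cast hdge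
        congr 1
        rw [hc, div_eq_div_iff (by positivity) (by positivity)]
        ring
      · by_cases hh1 : b % a = 1
        · right; left
          refine ⟨a, b / a, ha2', hdge, ?_⟩
          have ht : b = a * (b / a) + 1 := by omega
          have hc : (b:ℚ) = (a:ℚ) * ((b/a : ℕ):ℚ) + 1 := by exact_mod_cast ht
          have hden : ((b/a : ℕ):ℚ) * (a:ℚ) + 1 = (b:ℚ) := by linear_combination -hc
          rw [hden]
        · by_cases hh2 : b % a = a - 1
          · right; right; left
            refine ⟨a, b / a + 1, ha2', by omega, ?_⟩
            have ht : b + 1 = a * (b / a) + a := by omega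
            have hc : (b:ℚ) + 1 = (a:ℚ) * ((b/a : ℕ):ℚ) + a := by exact_mod_cast ht
            have hden : ((b/a + 1 : ℕ):ℚ) * (a:ℚ) - 1 = (b:ℚ) := by
              push_cast
              linear_combination -hc
            rw [hden]
          · right; right; right
            have hlt : b % a < a := Nat.mod_lt _ (by omega)
            have ha4 : 4 ≤ a := by omega
            refine ⟨a - 1, b, by omega, by omega, ?_, ?_, ?_, ?_⟩
            · rw [show a - 1 + 1 = a by omega]; exact h0
            · rw [show a - 1 + 1 = a by omega]; exact hh1
            · rw [show a - 1 + 1 = a by omega]; omega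
            · have hc : ((a-1:ℕ):ℚ) + 1 = (a:ℚ) := by
                exact_mod_cast (show a - 1 + 1 = a by omega)
              rw [hc]
end
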